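/- arXiv:math/0602557 — 5 statements merged into one kernel-verified Lean document; each statement's English description precedes it below -/
import Mathlib

section
/- Fix 0 < α < β < 1 and let γ : [0,1] → (0,1) be continuous. Suppose F ∈ C¹([0,1]) is increasing with F(0)=α, F(1)=β, F twice differentiable on (0,1) and satisfying F'' = (γ - F) (F')² / (F(1-F)). Define G(F) = ∫₀¹ [γ log(γ/F) + (1-γ) log((1-γ)/(1-F)) + log(F'/(β-α))] du and F₀(γ) = ∫₀¹ [γ log(γ/ρ̄) + (1-γ) log((1-γ)/(1-ρ̄))] du where ρ̄(u) = α(1-u)+βu. Then G(F) ≥ F₀(γ), i.e. the nonlocal rate functional dominates the local one. -/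
open Real MeasureTheory Set Filter Topology

/-- relative entropy of Bernoulli(x) wrt Bernoulli(r) is nonneg -/
lemma bern_entropy_nonneg {x r : ℝ} (hx0 : 0 < x) (hx1 : x < 1) (hr0 : 0 < r) (hr1 : r < 1) :
    0 ≤ x * (log x - log r) + (1 - x) * (log (1 - x) - log (1 - r)) := by
  have h1 : log r - log x ≤ r / x - 1 := by
    have := Real.log_le_sub_one_of_pos (show 0 < r / x by positivity)
    rwa [log_div hr0.ne' hx0.ne'] at this
  have h2 : log (1 - r) - log (1 - x) ≤ (1 - r) / (1 - x) - 1 := by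
    have := Real.log_le_sub_one_of_pos (show 0 < (1 - r) / (1 - x) by
      have : 0 < 1 - r := by linarith
      have : 0 < 1 - x := by linarith
      positivity)
    rwa [log_div (by linarith) (by linarith)] at this
  have e1 : x * (log x - log r) ≥ x - r := by
    have := mul_le_mul_of_nonneg_left h1 hx0.le
    have : x * (r/x) = r := by field_simp
    nlinarith [mul_le_mul_of_nonneg_left h1 hx0.le]
  have e2 : (1 - x) * (log (1 - x) - log (1 - r)) ≥ r - x := by
    have hx1' : 0 < 1 - x := by linarith
    have : (1-x) * ((1-r)/(1-x)) = 1-r := by field_simp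
    nlinarith [mul_le_mul_of_nonneg_left h2 hx1'.le]
  linarith

/-- pointwise nonnegativity of Φ -/
lemma phi_nonneg {x r p q : ℝ} (hx0 : 0 < x) (hx1 : x < 1) (hr0 : 0 < r) (hr1 : r < 1)
    (hp : 0 < p) (hq : 0 < q) :
    0 ≤ (1 - x) * (log r - log x) + x * (log (1 - r) - log (1 - x))
      + log p - log q + q * (x * (1 - x)) / (p * (r * (1 - r))) - 1 := by
  have hx1' : 0 < 1 - x := by linarith
  have hr1' : 0 < 1 - r := by linarith
  set t : ℝ := q * (x * (1 - x)) / (p * (r * (1 - r))) with ht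
  have htpos : 0 < t := by positivity
  have hlt : log t ≤ t - 1 := Real.log_le_sub_one_of_pos htpos
  have hlog : log t = log q + (log x + log (1 - x)) - (log p + (log r + log (1 - r))) := by
    rw [ht, log_div (by positivity) (by positivity), log_mul hq.ne' (by positivity),
      log_mul hx0.ne' hx1'.ne', log_mul hp.ne' (by positivity), log_mul hr0.ne' hr1'.ne']
  have key : log p - log q + t - 1 ≥ log x + log (1 - x) - log r - log (1 - r) := by
    rw [hlog] at hlt; linarith
  have hent := bern_entropy_nonneg hx0 hx1 hr0 hr1
  have ring1 : (1 - x) * (log r - log x) + x * (log (1 - r) - log (1 - x))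
      + (log x + log (1 - x) - log r - log (1 - r))
      = x * (log x - log r) + (1 - x) * (log (1 - x) - log (1 - r)) := by ring
  linarith

lemma intervalIntegrable_of_bdd {f : ℝ → ℝ} {C : ℝ}
    (hc : ContinuousOn f (Ioo 0 1)) (hb : ∀ u ∈ Ioo (0:ℝ) 1, |f u| ≤ C) :
    IntervalIntegrable f volume 0 1 := by
  rw [intervalIntegrable_iff_integrableOn_Ioo_of_le (by norm_num)]
  have hm : AEStronglyMeasurable f (volume.restrict (Ioo (0:ℝ) 1)) :=
    hc.aestronglyMeasurable measurableSet_Ioo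
  refine Integrable.mono' (g := fun _ => C) (integrable_const C) hm ?_
  filter_upwards [ae_restrict_mem measurableSet_Ioo] with u hu
  simpa using hb u hu

lemma deriv_lower (α β : ℝ) (hα : 0 < α) (hαβ : α < β) (hβ : β < 1)
    (γ F : ℝ → ℝ)
    (hγc : ContinuousOn γ (Set.Icc 0 1))
    (hγ : ∀ u ∈ Set.Icc (0:ℝ) 1, γ u ∈ Set.Ioo (0:ℝ) 1)
    (hFC1 : ContDiffOn ℝ 1 F (Set.Icc 0 1))
    (hFmono : StrictMonoOn F (Set.Icc 0 1))
    (hF0 : F 0 = α) (hF1 : F 1 = β)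
    (hFdiff2 : ∀ u ∈ Set.Ioo (0:ℝ) 1, DifferentiableAt ℝ (deriv F) u)
    (hODE : ∀ u ∈ Set.Ioo (0:ℝ) 1,
      deriv (deriv F) u = (γ u - F u) * (deriv F u)^2 / (F u * (1 - F u))) :
    ∃ δ : ℝ, 0 < δ ∧ ∀ u ∈ Ioo (0:ℝ) 1, δ ≤ deriv F u := by
  have hsub : Ioo (0:ℝ) 1 ⊆ Icc 0 1 := Ioo_subset_Icc_self
  have hFcont : ContinuousOn F (Icc 0 1) := hFC1.continuousOn
  have hFdiffAt : ∀ u ∈ Ioo (0:ℝ) 1, DifferentiableAt ℝ F u := fun u hu =>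
    ((hFC1.differentiableOn one_ne_zero) u (hsub hu)).differentiableAt
      (Icc_mem_nhds hu.1 hu.2)
  have hp_eq : ∀ u ∈ Ioo (0:ℝ) 1, derivWithin F (Icc 0 1) u = deriv F u := fun u hu =>
    derivWithin_of_mem_nhds (Icc_mem_nhds hu.1 hu.2)
  have hptc : ContinuousOn (derivWithin F (Icc 0 1)) (Icc 0 1) :=
    hFC1.continuousOn_derivWithin (uniqueDiffOn_Icc (by norm_num)) (le_refl 1)
  obtain ⟨Mp, hMp⟩ := isCompact_Icc.exists_bound_of_continuousOn hptc
  have hMp0 : 0 ≤ Mp := le_trans (norm_nonneg _) (hMp 0 (by norm_num))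
  have hFb : ∀ u ∈ Icc (0:ℝ) 1, α ≤ F u ∧ F u ≤ β := by
    intro u hu
    constructor
    · rw [← hF0]
      exact hFmono.monotoneOn (by norm_num) hu hu.1
    · rw [← hF1]
      exact hFmono.monotoneOn hu (by norm_num) hu.2
  set m : ℝ := min (α*(1-α)) (β*(1-β)) with hm_def
  have hm : 0 < m := lt_min (by nlinarith) (by nlinarith)
  have hFm : ∀ u ∈ Icc (0:ℝ) 1, m ≤ F u * (1 - F u) := by
    intro u hu
    obtain ⟨h1, h2⟩ := hFb u hu
    rcases le_total (F u + α) 1 with hc | hc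
    · exact le_trans (min_le_left _ _) (by nlinarith)
    · exact le_trans (min_le_right _ _) (by nlinarith)
  have hFmne : ∀ u ∈ Ioo (0:ℝ) 1, F u * (1 - F u) ≠ 0 := fun u hu =>
    ne_of_gt (lt_of_lt_of_le hm (hFm u (hsub hu)))
  have hdc : ContinuousOn (deriv F) (Ioo 0 1) := fun u hu =>
    ((hFdiff2 u hu).continuousAt).continuousWithinAt
  set a : ℝ → ℝ := fun u => (γ u - F u) / (F u * (1 - F u)) * deriv F u with ha_def
  have ha_cont : ContinuousOn a (Ioo 0 1) := by
    apply ContinuousOn.mul _ hdc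
    exact ((hγc.mono hsub).sub (hFcont.mono hsub)).div
      ((hFcont.mono hsub).mul (continuousOn_const.sub (hFcont.mono hsub))) hFmne
  set C : ℝ := (1/m) * Mp with hC_def
  have hC0 : 0 ≤ C := by positivity
  have ha_bdd : ∀ u ∈ Ioo (0:ℝ) 1, |a u| ≤ C := by
    intro u hu
    obtain ⟨h1, h2⟩ := hFb u (hsub hu)
    obtain ⟨hg1, hg2⟩ := hγ u (hsub hu)
    have hd1 : |γ u - F u| ≤ 1 := by
      rw [abs_le]; constructor <;> nlinarith
    have hd2 : m ≤ F u * (1 - F u) := hFm u (hsub hu)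
    have hd3 : |deriv F u| ≤ Mp := by
      rw [← hp_eq u hu]
      simpa using hMp u (hsub hu)
    rw [ha_def]
    rw [abs_mul ((γ u - F u) / (F u * (1 - F u))) (deriv F u), abs_div]
    have habs : |F u * (1 - F u)| = F u * (1 - F u) := abs_of_pos (lt_of_lt_of_le hm hd2)
    have e1 : |γ u - F u| / |F u * (1 - F u)| ≤ 1 / m := by
      rw [habs]
      exact div_le_div₀ one_pos.le hd1 hm hd2
    calc |γ u - F u| / |F u * (1 - F u)| * |deriv F u| ≤ (1/m) * Mp :=
        mul_le_mul e1 hd3 (abs_nonneg _) (by positivity)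
      _ = C := rfl
  have hhalf : (1/2 : ℝ) ∈ Ioo (0:ℝ) 1 := by norm_num
  set A₀ : ℝ → ℝ := fun u => ∫ t in (1/2 : ℝ)..u, a t with hA₀_def
  have hA₀deriv : ∀ u ∈ Ioo (0:ℝ) 1, HasDerivAt A₀ (a u) u := by
    intro u hu
    apply intervalIntegral.integral_hasDerivAt_right
    · apply ContinuousOn.intervalIntegrable
      exact ha_cont.mono ((ordConnected_Ioo).uIcc_subset hhalf hu)
    · exact ha_cont.stronglyMeasurableAtFilter isOpen_Ioo u hu
    · exact ha_cont.continuousAt (isOpen_Ioo.mem_nhds hu)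
  have hA₀bdd : ∀ u ∈ Ioo (0:ℝ) 1, |A₀ u| ≤ C := by
    intro u hu
    have h1 : |A₀ u| ≤ C * |u - 1/2| := by
      have := intervalIntegral.norm_integral_le_of_norm_le_const (f := a) (a := (1/2:ℝ))
        (b := u) (C := C) (fun x hx => by
          have hx' : x ∈ Ioo (0:ℝ) 1 := (ordConnected_Ioo).uIcc_subset hhalf hu
            (uIoc_subset_uIcc hx)
          simpa using ha_bdd x hx')
      simpa [hA₀_def, one_div] using this
    have h2 : |u - 1/2| ≤ 1 := by
      rw [abs_le]; constructor <;> [linarith [hu.1]; linarith [hu.2]]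
    calc |A₀ u| ≤ C * |u - 1/2| := h1
      _ ≤ C * 1 := by nlinarith [abs_nonneg (u - 1/2)]
      _ = C := mul_one C
  set h : ℝ → ℝ := fun u => deriv F u * exp (-A₀ u) with hh_def
  have hhd : ∀ u ∈ Ioo (0:ℝ) 1, HasDerivAt h 0 u := by
    intro u hu
    have hd1 : HasDerivAt (deriv F) (deriv (deriv F) u) u := (hFdiff2 u hu).hasDerivAt
    have hd2 : HasDerivAt (fun v => exp (-A₀ v)) (exp (-A₀ u) * -(a u)) u :=
      ((hA₀deriv u hu).neg).exp
    have hd3 := hd1.mul hd2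
    have h0 : deriv (deriv F) u * exp (-A₀ u) + deriv F u * (exp (-A₀ u) * -(a u)) = 0 := by
      rw [hODE u hu, ha_def]
      have hne := hFmne u hu
      field_simp
      try ring
      try tauto
    rw [h0] at hd3
    exact hd3
  have hhc : ContinuousOn h (Ioo 0 1) := fun u hu =>
    (hhd u hu).continuousAt.continuousWithinAt
  have hhdiff : DifferentiableOn ℝ h (interior (Ioo (0:ℝ) 1)) := by
    rw [interior_Ioo]
    exact fun u hu => (hhd u hu).differentiableAt.differentiableWithinAt
  have hconst : ∀ u ∈ Ioo (0:ℝ) 1, ∀ v ∈ Ioo (0:ℝ) 1, h u = h v := by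
    have hmono : MonotoneOn h (Ioo 0 1) := monotoneOn_of_deriv_nonneg (convex_Ioo 0 1)
      hhc hhdiff (by rw [interior_Ioo]; intro u hu; rw [(hhd u hu).deriv])
    have hanti : AntitoneOn h (Ioo 0 1) := antitoneOn_of_deriv_nonpos (convex_Ioo 0 1)
      hhc hhdiff (by rw [interior_Ioo]; intro u hu; rw [(hhd u hu).deriv])
    intro u hu v hv
    rcases le_total u v with huv | huv
    · exact le_antisymm (hmono hu hv huv) (hanti hu hv huv)
    · exact le_antisymm (hanti hv hu huv) (hmono hv hu huv)
  obtain ⟨c, hc, hc'⟩ := exists_hasDerivAt_eq_slope F (deriv F) (by norm_num : (0:ℝ) < 1)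
    hFcont (fun u hu => (hFdiffAt u hu).hasDerivAt)
  have hc'' : deriv F c = β - α := by rw [hc', hF0, hF1]; norm_num
  refine ⟨(β - α) * exp (-(2*C)), mul_pos (by linarith) (exp_pos _), ?_⟩
  intro u hu
  have h1 : deriv F u * exp (-A₀ u) = (β - α) * exp (-A₀ c) := by
    have := hconst u hu c hc
    rw [hh_def] at this
    simpa [hc''] using this
  have h2 : deriv F u = (β - α) * exp (A₀ u - A₀ c) := by
    have h3 : exp (-A₀ u) ≠ 0 := exp_ne_zero _
    have h4 : exp (A₀ u - A₀ c) * exp (-A₀ u) = exp (-A₀ c) := by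
      rw [← exp_add]; ring_nf
    field_simp at h1 ⊢
    nlinarith [h1, h4, exp_pos (-A₀ u)]
  rw [h2]
  apply mul_le_mul_of_nonneg_left _ (by linarith : (0:ℝ) ≤ β - α)
  apply exp_le_exp.mpr
  have hbu := hA₀bdd u hu
  have hbc := hA₀bdd c hc
  rw [abs_le] at hbu hbc
  linarith [hbu.1, hbc.2]

/-- The nonlocal Derrida–Lebowitz–Speer free energy dominates the local rate
functional: `G(F) ≥ F₀(γ)` when `F` solves the nonlinear boundary value problem. -/
theorem stmt_4 (α β : ℝ) (hα : 0 < α) (hαβ : α < β) (hβ : β < 1)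
    (γ F ρbar : ℝ → ℝ)
    (hγc : ContinuousOn γ (Set.Icc 0 1))
    (hγ : ∀ u ∈ Set.Icc (0:ℝ) 1, γ u ∈ Set.Ioo (0:ℝ) 1)
    (hFC1 : ContDiffOn ℝ 1 F (Set.Icc 0 1))
    (hFmono : StrictMonoOn F (Set.Icc 0 1))
    (hF0 : F 0 = α) (hF1 : F 1 = β)
    (hFdiff2 : ∀ u ∈ Set.Ioo (0:ℝ) 1, DifferentiableAt ℝ (deriv F) u)
    (hODE : ∀ u ∈ Set.Ioo (0:ℝ) 1,
      deriv (deriv F) u = (γ u - F u) * (deriv F u)^2 / (F u * (1 - F u)))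
    (hρbar : ∀ u, ρbar u = α * (1 - u) + β * u) :
    (∫ u in (0:ℝ)..1,
      (γ u * log (γ u / F u) + (1 - γ u) * log ((1 - γ u) / (1 - F u))
        + log (deriv F u / (β - α)))) ≥
    (∫ u in (0:ℝ)..1,
      (γ u * log (γ u / ρbar u) + (1 - γ u) * log ((1 - γ u) / (1 - ρbar u)))) := by
  have hq : (0:ℝ) < β - α := by linarith
  have hsub : Ioo (0:ℝ) 1 ⊆ Icc 0 1 := Ioo_subset_Icc_self
  have hFcont : ContinuousOn F (Icc 0 1) := hFC1.continuousOn
  have hFdiffAt : ∀ u ∈ Ioo (0:ℝ) 1, DifferentiableAt ℝ F u := fun u hu =>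
    ((hFC1.differentiableOn one_ne_zero) u (hsub hu)).differentiableAt
      (Icc_mem_nhds hu.1 hu.2)
  have hp_eq : ∀ u ∈ Ioo (0:ℝ) 1, derivWithin F (Icc 0 1) u = deriv F u := fun u hu =>
    derivWithin_of_mem_nhds (Icc_mem_nhds hu.1 hu.2)
  have hptc : ContinuousOn (derivWithin F (Icc 0 1)) (Icc 0 1) :=
    hFC1.continuousOn_derivWithin (uniqueDiffOn_Icc (by norm_num)) (le_refl 1)
  have hFb : ∀ u ∈ Icc (0:ℝ) 1, α ≤ F u ∧ F u ≤ β := by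
    intro u hu
    exact ⟨hF0 ▸ hFmono.monotoneOn (by norm_num) hu hu.1,
      hF1 ▸ hFmono.monotoneOn hu (by norm_num) hu.2⟩
  have hF01 : ∀ u ∈ Icc (0:ℝ) 1, 0 < F u ∧ F u < 1 := fun u hu =>
    ⟨lt_of_lt_of_le hα (hFb u hu).1, lt_of_le_of_lt (hFb u hu).2 hβ⟩
  have hrb : ∀ u ∈ Icc (0:ℝ) 1, α ≤ ρbar u ∧ ρbar u ≤ β := by
    intro u hu
    rw [hρbar u]
    constructor <;> nlinarith [hu.1, hu.2]
  have hr01 : ∀ u ∈ Icc (0:ℝ) 1, 0 < ρbar u ∧ ρbar u < 1 := fun u hu =>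
    ⟨lt_of_lt_of_le hα (hrb u hu).1, lt_of_le_of_lt (hrb u hu).2 hβ⟩
  have hrc : ContinuousOn ρbar (Icc 0 1) := by
    have : ρbar = fun u => α * (1 - u) + β * u := funext hρbar
    rw [this]; fun_prop
  have hρd : ∀ u : ℝ, HasDerivAt ρbar (β - α) u := by
    intro u
    have h1 : HasDerivAt (fun v : ℝ => (1:ℝ) - v) (-1) u := (hasDerivAt_id u).const_sub 1
    have h2 := (h1.const_mul α).add ((hasDerivAt_id u).const_mul β)
    have h3 : HasDerivAt (fun x : ℝ => α * (1 - x) + β * id x) (β - α) u := by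
      exact h2.congr_deriv (by ring)
    exact h3.congr_of_eventuallyEq (Filter.Eventually.of_forall fun v => by
      simp [hρbar v])
  -- lower bound for the derivative
  obtain ⟨δ, hδ, hδF⟩ := deriv_lower α β hα hαβ hβ γ F hγc hγ hFC1 hFmono hF0 hF1 hFdiff2 hODE
  have hpt_pos : ∀ u ∈ Icc (0:ℝ) 1, δ ≤ derivWithin F (Icc 0 1) u := by
    intro u hu
    rcases eq_or_lt_of_le hu.1 with h0 | h0
    · -- u = 0 : limit argument
      subst h0
      have hne : (𝓝[Ioo (0:ℝ) 1] (0:ℝ)).NeBot := by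
        rw [← mem_closure_iff_nhdsWithin_neBot, closure_Ioo (by norm_num : (0:ℝ) ≠ 1)]
        norm_num
      have htend : Filter.Tendsto (derivWithin F (Icc 0 1)) (𝓝[Ioo (0:ℝ) 1] 0)
          (𝓝 (derivWithin F (Icc 0 1) 0)) :=
        (hptc 0 (by norm_num)).mono_left (nhdsWithin_mono _ hsub)
      refine ge_of_tendsto htend ?_
      filter_upwards [self_mem_nhdsWithin] with v hv
      rw [hp_eq v hv]; exact hδF v hv
    rcases eq_or_lt_of_le hu.2 with h1 | h1
    · have h1' : u = 1 := h1
      subst h1'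
      have hne : (𝓝[Ioo (0:ℝ) 1] (1:ℝ)).NeBot := by
        rw [← mem_closure_iff_nhdsWithin_neBot, closure_Ioo (by norm_num : (0:ℝ) ≠ 1)]
        norm_num
      have htend : Filter.Tendsto (derivWithin F (Icc 0 1)) (𝓝[Ioo (0:ℝ) 1] 1)
          (𝓝 (derivWithin F (Icc 0 1) 1)) :=
        (hptc 1 (by norm_num)).mono_left (nhdsWithin_mono _ hsub)
      refine ge_of_tendsto htend ?_
      filter_upwards [self_mem_nhdsWithin] with v hv
      rw [hp_eq v hv]; exact hδF v hv
    · rw [hp_eq u ⟨h0, h1⟩]; exact hδF u ⟨h0, h1⟩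
  have hpt_ne : ∀ u ∈ Icc (0:ℝ) 1, derivWithin F (Icc 0 1) u ≠ 0 := fun u hu =>
    ne_of_gt (lt_of_lt_of_le hδ (hpt_pos u hu))
  -- nonvanishing facts
  have hFne : ∀ u ∈ Icc (0:ℝ) 1, F u ≠ 0 := fun u hu => ne_of_gt (hF01 u hu).1
  have hF1ne : ∀ u ∈ Icc (0:ℝ) 1, (1:ℝ) - F u ≠ 0 := fun u hu =>
    ne_of_gt (by linarith [(hF01 u hu).2])
  have hrne : ∀ u ∈ Icc (0:ℝ) 1, ρbar u ≠ 0 := fun u hu => ne_of_gt (hr01 u hu).1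
  have hr1ne : ∀ u ∈ Icc (0:ℝ) 1, (1:ℝ) - ρbar u ≠ 0 := fun u hu =>
    ne_of_gt (by linarith [(hr01 u hu).2])
  have hγne : ∀ u ∈ Icc (0:ℝ) 1, γ u ≠ 0 := fun u hu => ne_of_gt (hγ u hu).1
  have hγ1ne : ∀ u ∈ Icc (0:ℝ) 1, (1:ℝ) - γ u ≠ 0 := fun u hu =>
    ne_of_gt (by linarith [(hγ u hu).2])
  have hqne : β - α ≠ 0 := ne_of_gt hq
  -- the three auxiliary functions
  set D : ℝ → ℝ := fun u => γ u * (log (ρbar u) - log (F u))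
      + (1 - γ u) * (log (1 - ρbar u) - log (1 - F u))
      + (log (derivWithin F (Icc 0 1) u) - log (β - α)) with hD_def
  set Φ : ℝ → ℝ := fun u => (1 - F u) * (log (ρbar u) - log (F u))
      + F u * (log (1 - ρbar u) - log (1 - F u))
      + log (derivWithin F (Icc 0 1) u) - log (β - α)
      + (β - α) * (F u * (1 - F u)) /
        (derivWithin F (Icc 0 1) u * (ρbar u * (1 - ρbar u))) - 1 with hΦ_def
  set B : ℝ → ℝ := fun u => -(F u * (1 - F u) / derivWithin F (Icc 0 1) u) *
      (log (ρbar u) - log (F u) - (log (1 - ρbar u) - log (1 - F u))) with hB_def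
  -- continuity
  have hlogr : ContinuousOn (fun u => log (ρbar u)) (Icc (0:ℝ) 1) := hrc.log hrne
  have hlogx : ContinuousOn (fun u => log (F u)) (Icc (0:ℝ) 1) := hFcont.log hFne
  have hlog1r : ContinuousOn (fun u => log (1 - ρbar u)) (Icc (0:ℝ) 1) :=
    (continuousOn_const.sub hrc).log hr1ne
  have hlog1x : ContinuousOn (fun u => log (1 - F u)) (Icc (0:ℝ) 1) :=
    (continuousOn_const.sub hFcont).log hF1ne
  have hlogp : ContinuousOn (fun u => log (derivWithin F (Icc 0 1) u)) (Icc (0:ℝ) 1) :=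
    hptc.log hpt_ne
  have hDc : ContinuousOn D (Icc (0:ℝ) 1) := by
    rw [hD_def]
    exact ((hγc.mul (hlogr.sub hlogx)).add
      ((continuousOn_const.sub hγc).mul (hlog1r.sub hlog1x))).add
      (hlogp.sub continuousOn_const)
  have hΦc : ContinuousOn Φ (Icc (0:ℝ) 1) := by
    rw [hΦ_def]
    apply ContinuousOn.sub _ continuousOn_const
    apply ContinuousOn.add
    · exact ((((continuousOn_const.sub hFcont).mul (hlogr.sub hlogx)).add
        (hFcont.mul (hlog1r.sub hlog1x))).add hlogp).sub continuousOn_const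
    · apply ContinuousOn.div
      · exact continuousOn_const.mul (hFcont.mul (continuousOn_const.sub hFcont))
      · exact hptc.mul (hrc.mul (continuousOn_const.sub hrc))
      · intro u hu
        exact mul_ne_zero (hpt_ne u hu) (mul_ne_zero (hrne u hu) (hr1ne u hu))
  have hBc : ContinuousOn B (Icc (0:ℝ) 1) := by
    rw [hB_def]
    apply ContinuousOn.mul
    · exact ((hFcont.mul (continuousOn_const.sub hFcont)).div hptc hpt_ne).neg
    · exact (hlogr.sub hlogx).sub (hlog1r.sub hlog1x)
  -- boundary values of B
  have hρ0 : ρbar 0 = α := by rw [hρbar]; ring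
  have hρ1 : ρbar 1 = β := by rw [hρbar]; ring
  have hB0 : B 0 = 0 := by rw [hB_def]; simp [hρ0, hF0]
  have hB1 : B 1 = 0 := by rw [hB_def]; simp [hρ1, hF1]
  -- derivative identity
  have hBd : ∀ u ∈ Ioo (0:ℝ) 1, HasDerivAt B (D u - Φ u) u := by
    intro u hu
    have huI := hsub hu
    have hxne := hFne u huI
    have hx1ne := hF1ne u huI
    have hrneu := hrne u huI
    have hr1neu := hr1ne u huI
    have hpne : deriv F u ≠ 0 := ne_of_gt (lt_of_lt_of_le hδ (hδF u hu))
    have hF' : HasDerivAt F (deriv F u) u := (hFdiffAt u hu).hasDerivAt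
    have hpt' : HasDerivAt (fun v => derivWithin F (Icc 0 1) v) (deriv (deriv F) u) u := by
      refine ((hFdiff2 u hu).hasDerivAt).congr_of_eventuallyEq ?_
      filter_upwards [isOpen_Ioo.mem_nhds hu] with v hv
      exact hp_eq v hv
    have hr' : HasDerivAt ρbar (β - α) u := hρd u
    have hlr : HasDerivAt (fun v => log (ρbar v)) ((β - α) / ρbar u) u := hr'.log hrneu
    have hlx : HasDerivAt (fun v => log (F v)) (deriv F u / F u) u := hF'.log hxne
    have hl1r : HasDerivAt (fun v => log (1 - ρbar v)) (-(β - α) / (1 - ρbar u)) u :=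
      (hr'.const_sub 1).log hr1neu
    have hl1x : HasDerivAt (fun v => log (1 - F v)) (-(deriv F u) / (1 - F u)) u :=
      (hF'.const_sub 1).log hx1ne
    have hA' := (hlr.sub hlx).sub (hl1r.sub hl1x)
    have hW' := (hF'.mul (hF'.const_sub 1)).div hpt'
      (by rw [hp_eq u hu]; exact hpne)
    have hB' := (hW'.neg).mul hA'
    change HasDerivAt B _ u at hB'
    convert hB' using 1
    simp only [hD_def, hΦ_def]
    rw [hp_eq u hu, hODE u hu]
    simp only [Pi.mul_apply, Pi.sub_apply, Pi.neg_apply, Pi.div_apply]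
    rw [hp_eq u hu]
    field_simp
    ring
  -- FTC for B
  have hIccIcc : uIcc (0:ℝ) 1 = Icc 0 1 := uIcc_of_le (by norm_num)
  have hDint : IntervalIntegrable D volume 0 1 := by
    apply ContinuousOn.intervalIntegrable; rw [hIccIcc]; exact hDc
  have hΦint : IntervalIntegrable Φ volume 0 1 := by
    apply ContinuousOn.intervalIntegrable; rw [hIccIcc]; exact hΦc
  have hDΦint : IntervalIntegrable (fun u => D u - Φ u) volume 0 1 := hDint.sub hΦint
  have hftc : ∫ u in (0:ℝ)..1, (D u - Φ u) = B 1 - B 0 :=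
    intervalIntegral.integral_eq_sub_of_hasDeriv_right_of_le (by norm_num) hBc
      (fun x hx => (hBd x hx).hasDerivWithinAt) hDΦint
  have hDeqΦ : ∫ u in (0:ℝ)..1, D u = ∫ u in (0:ℝ)..1, Φ u := by
    have hfun : D = fun u => Φ u + (D u - Φ u) := by funext u; ring
    calc ∫ u in (0:ℝ)..1, D u = ∫ u in (0:ℝ)..1, (Φ u + (D u - Φ u)) := by rw [← hfun]
      _ = (∫ u in (0:ℝ)..1, Φ u) + ∫ u in (0:ℝ)..1, (D u - Φ u) :=
          intervalIntegral.integral_add hΦint hDΦint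
      _ = ∫ u in (0:ℝ)..1, Φ u := by rw [hftc, hB0, hB1]; ring
  have hΦnn : 0 ≤ ∫ u in (0:ℝ)..1, Φ u := by
    apply intervalIntegral.integral_nonneg (by norm_num)
    intro u hu
    rw [hΦ_def]
    exact phi_nonneg (hF01 u hu).1 (hF01 u hu).2 (hr01 u hu).1 (hr01 u hu).2
      (lt_of_lt_of_le hδ (hpt_pos u hu)) hq
  -- RHS integrand integrable
  have hRc : ContinuousOn (fun u => γ u * log (γ u / ρbar u)
      + (1 - γ u) * log ((1 - γ u) / (1 - ρbar u))) (Icc (0:ℝ) 1) := by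
    apply ContinuousOn.add
    · exact hγc.mul ((hγc.div hrc hrne).log
        (fun u hu => div_ne_zero (hγne u hu) (hrne u hu)))
    · exact (continuousOn_const.sub hγc).mul
        (((continuousOn_const.sub hγc).div (continuousOn_const.sub hrc) hr1ne).log
          (fun u hu => div_ne_zero (hγ1ne u hu) (hr1ne u hu)))
  have hRint : IntervalIntegrable (fun u => γ u * log (γ u / ρbar u)
      + (1 - γ u) * log ((1 - γ u) / (1 - ρbar u))) volume 0 1 := by
    apply ContinuousOn.intervalIntegrable; rw [hIccIcc]; exact hRc
  -- split the LHS
  have hsplit : (∫ u in (0:ℝ)..1,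
      (γ u * log (γ u / F u) + (1 - γ u) * log ((1 - γ u) / (1 - F u))
        + log (deriv F u / (β - α))))
      = (∫ u in (0:ℝ)..1, (γ u * log (γ u / ρbar u)
          + (1 - γ u) * log ((1 - γ u) / (1 - ρbar u)))) + ∫ u in (0:ℝ)..1, D u := by
    rw [← intervalIntegral.integral_add hRint hDint]
    apply intervalIntegral.integral_congr_ae
    have hae : ∀ᵐ x : ℝ, x ∉ ({1} : Set ℝ) :=
      measure_eq_zero_iff_ae_notMem.mp Real.volume_singleton
    filter_upwards [hae] with u hu1' huIoc
    have hu1 : u ≠ 1 := by simpa using hu1'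
    rw [uIoc_of_le (by norm_num : (0:ℝ) ≤ 1)] at huIoc
    have hu : u ∈ Ioo (0:ℝ) 1 := ⟨huIoc.1, lt_of_le_of_ne huIoc.2 hu1⟩
    have huI := hsub hu
    have hpne : deriv F u ≠ 0 := ne_of_gt (lt_of_lt_of_le hδ (hδF u hu))
    rw [hD_def]
    simp only []
    rw [hp_eq u hu, log_div (hγne u huI) (hFne u huI), log_div (hγne u huI) (hrne u huI),
      log_div (hγ1ne u huI) (hF1ne u huI), log_div (hγ1ne u huI) (hr1ne u huI),
      log_div hpne hqne]
    ring
  rw [ge_iff_le, hsplit, hDeqΦ]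
  linarith
end

section
/- Let F : [0,T] × [0,1] → (0,1) be smooth with F' = ∂F/∂u never vanishing, and suppose F satisfies the heat equation ∂_t F = (1/2)∂_u² F. Define ρ_t(u) = F_t(u) + F_t(u)(1-F_t(u)) · ∂_u²F_t(u)/(∂_u F_t(u))². Then ρ satisfies the adjoint hydrodynamic equation ∂_t ρ = (1/2)∂_u²ρ − ∂_u( ρ(1-ρ) ∂_u φ ), where φ_t(u) = log(F_t(u)/(1-F_t(u))). -/
open Real

lemma deriv_snd {G : ℝ → ℝ → ℝ} (hG : ContDiff ℝ (⊤ : ℕ∞) (Function.uncurry G)) (s v : ℝ) :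
    HasDerivAt (G s) (fderiv ℝ (Function.uncurry G) (s, v) (0, 1)) v := by
  have hU : HasFDerivAt (Function.uncurry G) (fderiv ℝ (Function.uncurry G) (s, v)) (s, v) :=
    (hG.differentiable (by simp) (s, v)).hasFDerivAt
  exact hU.comp_hasDerivAt v ((hasDerivAt_const v s).prodMk (hasDerivAt_id v))

lemma deriv_fst {G : ℝ → ℝ → ℝ} (hG : ContDiff ℝ (⊤ : ℕ∞) (Function.uncurry G)) (s v : ℝ) :
    HasDerivAt (fun s' => G s' v) (fderiv ℝ (Function.uncurry G) (s, v) (1, 0)) s := by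
  have hU : HasFDerivAt (Function.uncurry G) (fderiv ℝ (Function.uncurry G) (s, v)) (s, v) :=
    (hG.differentiable (by simp) (s, v)).hasFDerivAt
  exact hU.comp_hasDerivAt s ((hasDerivAt_id s).prodMk (hasDerivAt_const s v))

lemma smooth_dsnd {G : ℝ → ℝ → ℝ} (hG : ContDiff ℝ (⊤ : ℕ∞) (Function.uncurry G)) :
    ContDiff ℝ (⊤ : ℕ∞) (Function.uncurry (fun s => deriv (G s))) := by
  have : (Function.uncurry (fun s => deriv (G s)))
      = fun p : ℝ × ℝ => fderiv ℝ (Function.uncurry G) p (0, 1) := by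
    ext ⟨s, v⟩
    exact (deriv_snd hG s v).deriv
  rw [this]
  exact (hG.fderiv_right (by simp)).clm_apply contDiff_const

lemma mixed {G : ℝ → ℝ → ℝ} (hG : ContDiff ℝ (⊤ : ℕ∞) (Function.uncurry G)) (t u : ℝ) :
    HasDerivAt (fun s => deriv (G s) u)
      (deriv (fun v => deriv (fun s => G s v) t) u) t := by
  set U := Function.uncurry G with hUdef
  set Φ := fderiv ℝ U with hΦ
  have hΦs : ContDiff ℝ (⊤ : ℕ∞) Φ := hG.fderiv_right (by simp)
  have h1 : HasDerivAt (fun s => Φ (s, u)) (fderiv ℝ Φ (t, u) (1, 0)) t :=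
    (hΦs.differentiable (by simp) (t, u)).hasFDerivAt.comp_hasDerivAt t
      ((hasDerivAt_id t).prodMk (hasDerivAt_const t u))
  have h2 : HasDerivAt (fun v => Φ (t, v)) (fderiv ℝ Φ (t, u) (0, 1)) u :=
    (hΦs.differentiable (by simp) (t, u)).hasFDerivAt.comp_hasDerivAt u
      ((hasDerivAt_const u t).prodMk (hasDerivAt_id u))
  have h1' : HasDerivAt (fun s => Φ (s, u) (0, 1)) (fderiv ℝ Φ (t, u) (1, 0) (0, 1)) t := by
    simpa using h1.clm_apply (hasDerivAt_const t ((0 : ℝ), (1 : ℝ)))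
  have h2' : HasDerivAt (fun v => Φ (t, v) (1, 0)) (fderiv ℝ Φ (t, u) (0, 1) (1, 0)) u := by
    simpa using h2.clm_apply (hasDerivAt_const u ((1 : ℝ), (0 : ℝ)))
  have hsymm : fderiv ℝ Φ (t, u) (1, 0) (0, 1) = fderiv ℝ Φ (t, u) (0, 1) (1, 0) :=
    (hG.contDiffAt.isSymmSndFDerivAt (by simp only [minSmoothness_of_isRCLikeNormedField]; exact WithTop.coe_le_coe.mpr le_top)) _ _
  have e1 : (fun s => deriv (G s) u) = fun s => Φ (s, u) (0, 1) := by
    ext s; exact (deriv_snd hG s u).deriv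
  have e2 : (fun v => deriv (fun s => G s v) t) = fun v => Φ (t, v) (1, 0) := by
    ext v; exact (deriv_fst hG t v).deriv
  rw [e1, e2, h2'.deriv, ← hsymm]
  exact h1'

/-- If `F` solves the heat equation `∂_t F = (1/2)∂_u² F` with values in `(0,1)`
and non-vanishing space derivative, then
`ρ = F + F(1-F) ∂_u²F/(∂_uF)²` solves the adjoint hydrodynamic equation
`∂_t ρ = (1/2)∂_u²ρ − ∂_u(ρ(1-ρ)∂_uφ)` with `φ = log(F/(1-F))`. -/
theorem stmt_7 (T : ℝ) (hT : 0 < T) (F : ℝ → ℝ → ℝ)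
    (hsmooth : ContDiff ℝ (⊤ : ℕ∞) (Function.uncurry F))
    (hrange : ∀ t ∈ Set.Icc (0:ℝ) T, ∀ u ∈ Set.Icc (0:ℝ) 1,
      F t u ∈ Set.Ioo (0:ℝ) 1)
    (hF' : ∀ t ∈ Set.Icc (0:ℝ) T, ∀ u ∈ Set.Icc (0:ℝ) 1, deriv (F t) u ≠ 0)
    (hheat : ∀ t ∈ Set.Icc (0:ℝ) T, ∀ u ∈ Set.Ioo (0:ℝ) 1,
      deriv (fun s => F s u) t = (1/2) * deriv (deriv (F t)) u)
    (ρ φ : ℝ → ℝ → ℝ)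
    (hρ : ∀ t u, ρ t u
      = F t u + F t u * (1 - F t u) * deriv (deriv (F t)) u / (deriv (F t) u)^2)
    (hφ : ∀ t u, φ t u = log (F t u / (1 - F t u))) :
    ∀ t ∈ Set.Icc (0:ℝ) T, ∀ u ∈ Set.Ioo (0:ℝ) 1,
      deriv (fun s => ρ s u) t
        = (1/2) * deriv (deriv (ρ t)) u
          - deriv (fun v => ρ t v * (1 - ρ t v) * deriv (φ t) v) u := by
  intro t ht u hu
  have huIcc : u ∈ Set.Icc (0:ℝ) 1 := Set.Ioo_subset_Icc_self hu
  -- one-variable smoothness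
  have cd0 : ContDiff ℝ (⊤ : ℕ∞) (F t) :=
    (hsmooth.comp (contDiff_const.prodMk contDiff_id)).of_le (by simp)
  have d0 : Differentiable ℝ (F t) := cd0.differentiable (by norm_num)
  have cd1 : ContDiff ℝ (⊤ : ℕ∞) (deriv (F t)) := (contDiff_infty_iff_deriv.mp cd0).2
  have d1 : Differentiable ℝ (deriv (F t)) := cd1.differentiable (by norm_num)
  have cd2 : ContDiff ℝ (⊤ : ℕ∞) (deriv (deriv (F t))) :=
    (contDiff_infty_iff_deriv.mp cd1).2
  have d2 : Differentiable ℝ (deriv (deriv (F t))) := cd2.differentiable (by norm_num)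
  have cd3 : ContDiff ℝ (⊤ : ℕ∞) (deriv (deriv (deriv (F t)))) :=
    (contDiff_infty_iff_deriv.mp cd2).2
  have d3 : Differentiable ℝ (deriv (deriv (deriv (F t)))) := cd3.differentiable (by norm_num)
  -- pointwise facts
  have ha : ∀ v ∈ Set.Icc (0:ℝ) 1, 0 < F t v := fun v hv => (hrange t ht v hv).1
  have hc : ∀ v ∈ Set.Icc (0:ℝ) 1, F t v < 1 := fun v hv => (hrange t ht v hv).2
  have hb : ∀ v ∈ Set.Icc (0:ℝ) 1, deriv (F t) v ≠ 0 := fun v hv => hF' t ht v hv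
  -- time derivatives
  have H0 : HasDerivAt (fun s => F s u) (1/2 * deriv (deriv (F t)) u) t := by
    have h := deriv_fst hsmooth t u
    have e : fderiv ℝ (Function.uncurry F) (t, u) (1, 0) = 1/2 * deriv (deriv (F t)) u := by
      rw [← h.deriv]; exact hheat t ht u hu
    rwa [e] at h
  have H1 : ∀ v ∈ Set.Ioo (0:ℝ) 1,
      HasDerivAt (fun s => deriv (F s) v) (1/2 * deriv (deriv (deriv (F t))) v) t := by
    intro v hv
    have h := mixed hsmooth t v
    have e : deriv (fun w => deriv (fun s => F s w) t) v
        = 1/2 * deriv (deriv (deriv (F t))) v := by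
      have heq : (fun w => deriv (fun s => F s w) t)
          =ᶠ[nhds v] fun w => 1/2 * deriv (deriv (F t)) w :=
        Filter.eventuallyEq_of_mem (isOpen_Ioo.mem_nhds hv) (fun w hw => hheat t ht w hw)
      rw [heq.deriv_eq]
      exact (((d2 v).hasDerivAt).const_mul (1/2)).deriv
    rwa [e] at h
  have H2 : HasDerivAt (fun s => deriv (deriv (F s)) u)
      (1/2 * deriv (deriv (deriv (deriv (F t)))) u) t := by
    have h : HasDerivAt (fun s => deriv (deriv (F s)) u)
        (deriv (fun v => deriv (fun s => deriv (F s) v) t) u) t :=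
      mixed (smooth_dsnd hsmooth) t u
    have e : deriv (fun v => deriv (fun s => deriv (F s) v) t) u
        = 1/2 * deriv (deriv (deriv (deriv (F t)))) u := by
      have heq : (fun v => deriv (fun s => deriv (F s) v) t)
          =ᶠ[nhds u] fun v => 1/2 * deriv (deriv (deriv (F t))) v :=
        Filter.eventuallyEq_of_mem (isOpen_Ioo.mem_nhds hu) (fun w hw => (H1 w hw).deriv)
      rw [heq.deriv_eq]
      exact (((d3 u).hasDerivAt).const_mul (1/2)).deriv
    rwa [e] at h
  -- derivative of φ
  have hφd : ∀ v ∈ Set.Ioo (0:ℝ) 1,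
      deriv (φ t) v = deriv (F t) v / (F t v * (1 - F t v)) := by
    intro v hv
    have hvI : v ∈ Set.Icc (0:ℝ) 1 := Set.Ioo_subset_Icc_self hv
    have heq : φ t =ᶠ[nhds v] fun w => Real.log (F t w) - Real.log (1 - F t w) := by
      refine Filter.eventuallyEq_of_mem (isOpen_Ioo.mem_nhds hv) (fun w hw => ?_)
      have hwI : w ∈ Set.Icc (0:ℝ) 1 := Set.Ioo_subset_Icc_self hw
      rw [hφ t w, Real.log_div (ne_of_gt (ha w hwI)) (sub_ne_zero.mpr (hc w hwI).ne')]
    rw [heq.deriv_eq]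
    have h1 : HasDerivAt (fun w => Real.log (F t w)) (deriv (F t) v / F t v) v :=
      ((d0 v).hasDerivAt).log (ne_of_gt (ha v hvI))
    have h2 : HasDerivAt (fun w => Real.log (1 - F t w))
        ((0 - deriv (F t) v) / (1 - F t v)) v :=
      (((hasDerivAt_const v (1:ℝ)).sub ((d0 v).hasDerivAt)).log
        (sub_ne_zero.mpr (hc v hvI).ne'))
    have h12 : HasDerivAt (fun w => Real.log (F t w) - Real.log (1 - F t w)) _ v := h1.sub h2
    rw [h12.deriv]
    have hav := ne_of_gt (ha v hvI)
    have hcv := sub_ne_zero.mpr (hc v hvI).ne'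
    field_simp
    ring
  -- formula function equals ρ t
  have hform : (fun w => F t w + F t w * (1 - F t w) * deriv (deriv (F t)) w
      / deriv (F t) w ^ 2) = ρ t := by
    funext w; exact (hρ t w).symm
  -- first spatial derivative of ρ
  have hA : ∀ v ∈ Set.Ioo (0:ℝ) 1, HasDerivAt (ρ t)
      (deriv (F t) v + (1 - 2 * F t v) * deriv (deriv (F t)) v / deriv (F t) v
        + F t v * (1 - F t v) * deriv (deriv (deriv (F t))) v / deriv (F t) v ^ 2
        - 2 * F t v * (1 - F t v) * deriv (deriv (F t)) v ^ 2 / deriv (F t) v ^ 3) v := by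
    intro v hv
    have hvI : v ∈ Set.Icc (0:ℝ) 1 := Set.Ioo_subset_Icc_self hv
    have hbv := hb v hvI
    rw [← hform]
    have key : HasDerivAt (fun w => F t w + F t w * (1 - F t w) * deriv (deriv (F t)) w
        / deriv (F t) w ^ 2) _ v := ((d0 v).hasDerivAt).add
      ((((d0 v).hasDerivAt.mul ((hasDerivAt_const v (1:ℝ)).sub (d0 v).hasDerivAt)).mul
        (d2 v).hasDerivAt).div ((d1 v).hasDerivAt.pow 2) (pow_ne_zero 2 hbv))
    convert key using 1
    simp only [Pi.add_apply, Pi.sub_apply, Pi.mul_apply, Pi.div_apply, Pi.pow_apply]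
    field_simp
    ring
  have hev : deriv (ρ t) =ᶠ[nhds u] (fun v =>
      deriv (F t) v + (1 - 2 * F t v) * deriv (deriv (F t)) v / deriv (F t) v
        + F t v * (1 - F t v) * deriv (deriv (deriv (F t))) v / deriv (F t) v ^ 2
        - 2 * F t v * (1 - F t v) * deriv (deriv (F t)) v ^ 2 / deriv (F t) v ^ 3) :=
    Filter.eventuallyEq_of_mem (isOpen_Ioo.mem_nhds hu) (fun w hw => (hA w hw).deriv)
  have hbu := hb u huIcc
  -- second spatial derivative of ρ
  have hA2 : HasDerivAt (fun v =>
      deriv (F t) v + (1 - 2 * F t v) * deriv (deriv (F t)) v / deriv (F t) v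
        + F t v * (1 - F t v) * deriv (deriv (deriv (F t))) v / deriv (F t) v ^ 2
        - 2 * F t v * (1 - F t v) * deriv (deriv (F t)) v ^ 2 / deriv (F t) v ^ 3) _ u := (((d1 u).hasDerivAt.add
      ((((hasDerivAt_const u (1:ℝ)).sub ((d0 u).hasDerivAt.const_mul 2)).mul
          (d2 u).hasDerivAt).div (d1 u).hasDerivAt hbu)).add
      ((((d0 u).hasDerivAt.mul ((hasDerivAt_const u (1:ℝ)).sub (d0 u).hasDerivAt)).mul
          (d3 u).hasDerivAt).div ((d1 u).hasDerivAt.pow 2) (pow_ne_zero 2 hbu))).sub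
      (((((d0 u).hasDerivAt.const_mul 2).mul
          ((hasDerivAt_const u (1:ℝ)).sub (d0 u).hasDerivAt)).mul
          ((d2 u).hasDerivAt.pow 2)).div ((d1 u).hasDerivAt.pow 3) (pow_ne_zero 3 hbu))
  -- the current term
  have hJev : (fun w => ρ t w * (1 - ρ t w) * deriv (φ t) w) =ᶠ[nhds u] (fun w =>
      deriv (F t) w + (1 - 2 * F t w) * deriv (deriv (F t)) w / deriv (F t) w
        - F t w * (1 - F t w) * deriv (deriv (F t)) w ^ 2 / deriv (F t) w ^ 3) := by
    refine Filter.eventuallyEq_of_mem (isOpen_Ioo.mem_nhds hu) (fun w hw => ?_)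
    have hwI : w ∈ Set.Icc (0:ℝ) 1 := Set.Ioo_subset_Icc_self hw
    have haw := ne_of_gt (ha w hwI)
    have hcw := sub_ne_zero.mpr (hc w hwI).ne'
    have hbw := hb w hwI
    rw [hρ t w, hφd w hw]
    field_simp
    ring
  have hJ2 : HasDerivAt (fun w =>
      deriv (F t) w + (1 - 2 * F t w) * deriv (deriv (F t)) w / deriv (F t) w
        - F t w * (1 - F t w) * deriv (deriv (F t)) w ^ 2 / deriv (F t) w ^ 3) _ u := (((d1 u).hasDerivAt.add
      ((((hasDerivAt_const u (1:ℝ)).sub ((d0 u).hasDerivAt.const_mul 2)).mul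
          (d2 u).hasDerivAt).div (d1 u).hasDerivAt hbu)).sub
      ((((d0 u).hasDerivAt.mul ((hasDerivAt_const u (1:ℝ)).sub (d0 u).hasDerivAt)).mul
          ((d2 u).hasDerivAt.pow 2)).div ((d1 u).hasDerivAt.pow 3) (pow_ne_zero 3 hbu)))
  -- time derivative of ρ
  have hLHS : HasDerivAt (fun s => ρ s u)
      (1/2 * deriv (deriv (F t)) u
        + (1 - 2 * F t u) * deriv (deriv (F t)) u ^ 2 / (2 * deriv (F t) u ^ 2)
        + F t u * (1 - F t u) * deriv (deriv (deriv (deriv (F t)))) u / (2 * deriv (F t) u ^ 2)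
        - F t u * (1 - F t u) * deriv (deriv (F t)) u * deriv (deriv (deriv (F t))) u
          / deriv (F t) u ^ 3) t := by
    have hfun : (fun s => ρ s u) = fun s => F s u + F s u * (1 - F s u)
        * deriv (deriv (F s)) u / deriv (F s) u ^ 2 := by
      funext s; exact hρ s u
    rw [hfun]
    have key : HasDerivAt (fun s => F s u + F s u * (1 - F s u)
        * deriv (deriv (F s)) u / deriv (F s) u ^ 2) _ t := H0.add (((H0.mul ((hasDerivAt_const t (1:ℝ)).sub H0)).mul H2).div
      ((H1 u hu).pow 2) (pow_ne_zero 2 hbu))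
    convert key using 1
    simp only [Pi.add_apply, Pi.sub_apply, Pi.mul_apply, Pi.div_apply, Pi.pow_apply]
    field_simp
    ring
  rw [hLHS.deriv, hev.deriv_eq, hA2.deriv, hJev.deriv_eq, hJ2.deriv]
  have hau := ne_of_gt (ha u huIcc)
  have hcu := sub_ne_zero.mpr (hc u huIcc).ne'
  simp only [Pi.add_apply, Pi.sub_apply, Pi.mul_apply, Pi.div_apply, Pi.pow_apply]
  field_simp
  ring
end

section
/- Let ρ : [0,∞) × [0,1] → (0,1) be a smooth solution of the heat equation ∂_t ρ = (1/2)∂_u²ρ with Dirichlet boundary conditions ρ_t(0) = ρ_t(1) = ᾱ for a constant ᾱ ∈ (0,1), and assume ρ_t → ᾱ uniformly together with its space derivative as t → ∞, with ∫₀^∞ ∫₀¹ (∂_u ρ_t)²/χ(ρ_t) du dt < ∞. Let s(a) = a log(a/ᾱ) + (1-a) log((1-a)/(1-ᾱ)) and F₀(γ) = ∫₀¹ s(γ(u)) du. Then (1/2)∫₀^∞∫₀¹ (∂_u ρ_t(u))²/(ρ_t(u)(1-ρ_t(u))) du dt = F₀(ρ₀). -/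
open Real MeasureTheory

/-- Onsager–Machlup identity for the reversible case: the cost of the reversed
relaxation trajectory equals the equilibrium free energy of the initial profile. -/
theorem stmt_9 (αbar : ℝ) (hα : αbar ∈ Set.Ioo (0:ℝ) 1)
    (ρ : ℝ → ℝ → ℝ)
    (hsmooth : ContDiff ℝ (⊤ : ℕ∞) (Function.uncurry ρ))
    (hrange : ∀ t ≥ (0:ℝ), ∀ u ∈ Set.Icc (0:ℝ) 1, ρ t u ∈ Set.Ioo (0:ℝ) 1)
    (hheat : ∀ t ≥ (0:ℝ), ∀ u ∈ Set.Ioo (0:ℝ) 1,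
      deriv (fun s => ρ s u) t = (1/2) * deriv (deriv (ρ t)) u)
    (hbound : ∀ t ≥ (0:ℝ), ρ t 0 = αbar ∧ ρ t 1 = αbar)
    (hconv : TendstoUniformlyOn (fun t u => ρ t u) (fun _ => αbar)
      Filter.atTop (Set.Icc 0 1))
    (hconv' : TendstoUniformlyOn (fun t u => deriv (ρ t) u) (fun _ => 0)
      Filter.atTop (Set.Icc 0 1))
    (hint : IntegrableOn
      (fun t => ∫ u in (0:ℝ)..1, (deriv (ρ t) u)^2 / (ρ t u * (1 - ρ t u)))
      (Set.Ioi 0))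
    (s : ℝ → ℝ)
    (hs : ∀ a, s a = a * log (a / αbar) + (1 - a) * log ((1 - a) / (1 - αbar))) :
    (1/2) * ∫ t in Set.Ioi (0:ℝ),
        (∫ u in (0:ℝ)..1, (deriv (ρ t) u)^2 / (ρ t u * (1 - ρ t u)))
      = ∫ u in (0:ℝ)..1, s (ρ 0 u) := by
  obtain ⟨hα0, hα1⟩ := hα
  have hα1' : (0:ℝ) < 1 - αbar := by linarith
  clear hconv'
  -- the free energy density S and its derivative sd
  set S : ℝ → ℝ := fun a => a * log (a / αbar) + (1 - a) * log ((1 - a) / (1 - αbar))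
    with hSdef
  set sd : ℝ → ℝ := fun a =>
      Real.log a - Real.log αbar - (Real.log (1-a) - Real.log (1-αbar)) with hsddef
  have hsdD : ∀ a ∈ Set.Ioo (0:ℝ) 1, HasDerivAt S (sd a) a := by
    intro a ha
    obtain ⟨ha0, ha1⟩ := ha
    have h1a : (0:ℝ) < 1 - a := by linarith
    have hlog1 : HasDerivAt (fun x : ℝ => Real.log (x / αbar)) (1/a) a := by
      have := (Real.hasDerivAt_log (div_ne_zero ha0.ne' hα0.ne')).comp a
        ((hasDerivAt_id a).div_const αbar)
      have : HasDerivAt (fun x : ℝ => Real.log (x / αbar)) _ a := this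
      convert this using 1
      have := ha0.ne'; have := hα0.ne'
      field_simp
    have hlog2 : HasDerivAt (fun x : ℝ => Real.log ((1 - x) / (1 - αbar))) (-(1/(1-a))) a := by
      have hi : HasDerivAt (fun x : ℝ => (1 - x) / (1 - αbar)) ((0-1)/(1-αbar)) a :=
        ((hasDerivAt_const a 1).sub (hasDerivAt_id a)).div_const (1-αbar)
      have := (Real.hasDerivAt_log (div_ne_zero h1a.ne' hα1'.ne')).comp a hi
      have : HasDerivAt (fun x : ℝ => Real.log ((1 - x) / (1 - αbar))) _ a := this
      convert this using 1
      have := h1a.ne'; have := hα1'.ne'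
      field_simp
      ring
    have hA : HasDerivAt (fun x : ℝ => x * log (x / αbar)) (1 * log (a/αbar) + a * (1/a)) a :=
      (hasDerivAt_id a).mul hlog1
    have hB : HasDerivAt (fun x : ℝ => (1-x) * log ((1-x)/(1-αbar)))
        ((0-1) * log ((1-a)/(1-αbar)) + (1-a) * (-(1/(1-a)))) a :=
      ((hasDerivAt_const a 1).sub (hasDerivAt_id a)).mul hlog2
    have : HasDerivAt S _ a := hA.add hB
    convert this using 1
    rw [hsddef]
    simp only
    rw [Real.log_div ha0.ne' hα0.ne', Real.log_div h1a.ne' hα1'.ne']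
    field_simp
    ring
  have hsd'D : ∀ a ∈ Set.Ioo (0:ℝ) 1, HasDerivAt sd (1/(a * (1-a))) a := by
    intro a ha
    obtain ⟨ha0, ha1⟩ := ha
    have h1a : (0:ℝ) < 1 - a := by linarith
    have hl1 : HasDerivAt (fun x : ℝ => Real.log x - Real.log αbar) (a⁻¹) a :=
      (Real.hasDerivAt_log ha0.ne').sub_const _
    have hl2 : HasDerivAt (fun x : ℝ => Real.log (1 - x) - Real.log (1-αbar))
        ((1-a)⁻¹ * (0-1)) a := by
      have hi : HasDerivAt (fun x : ℝ => 1 - x) (0-1) a :=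
        (hasDerivAt_const a 1).sub (hasDerivAt_id a)
      exact ((Real.hasDerivAt_log h1a.ne').comp a hi).sub_const _
    have : HasDerivAt sd _ a := hl1.sub hl2
    convert this using 1
    have := ha0.ne'; have := h1a.ne'
    field_simp
    ring
  have hsdα : sd αbar = 0 := by simp [hsddef]
  have hSα : S αbar = 0 := by
    rw [hSdef]; simp only
    rw [div_self hα0.ne', div_self hα1'.ne', Real.log_one]; ring
  -- rewrite s as S
  have hsS : s = S := funext hs
  subst hsS
  -- derivatives of ρ
  set U := Function.uncurry ρ with hUdef
  have hUc : Continuous U := hsmooth.continuous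
  have hUdiff : Differentiable ℝ U := hsmooth.differentiable (by simp)
  have hG : ContDiff ℝ (⊤ : ℕ∞) (fderiv ℝ U) := hsmooth.fderiv_right (by simp)
  have hGdiff : Differentiable ℝ (fderiv ℝ U) := hG.differentiable (by simp)
  set T' : ℝ → ℝ → ℝ := fun t u => fderiv ℝ U (t,u) (1,0) with hT'def
  set P : ℝ → ℝ → ℝ := fun t u => fderiv ℝ U (t,u) (0,1) with hPdef
  set Q : ℝ → ℝ → ℝ := fun t u => fderiv ℝ (fderiv ℝ U) (t,u) (0,1) (0,1) with hQdefn
  have hdt : ∀ t u, HasDerivAt (fun τ => ρ τ u) (T' t u) t := by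
    intro t u
    have h1 : HasDerivAt (fun τ => ((τ, u) : ℝ × ℝ)) ((1,0) : ℝ × ℝ) t :=
      (hasDerivAt_id t).prodMk (hasDerivAt_const t u)
    exact (hUdiff (t,u)).hasFDerivAt.comp_hasDerivAt t h1
  have hdu : ∀ t u, HasDerivAt (fun v => ρ t v) (P t u) u := by
    intro t u
    have h1 : HasDerivAt (fun v => ((t, v) : ℝ × ℝ)) ((0,1) : ℝ × ℝ) u :=
      (hasDerivAt_const u t).prodMk (hasDerivAt_id u)
    exact (hUdiff (t,u)).hasFDerivAt.comp_hasDerivAt u h1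
  have hPd : ∀ t u, deriv (ρ t) u = P t u := fun t u => (hdu t u).deriv
  have hQd : ∀ t u, HasDerivAt (fun v => P t v) (Q t u) u := by
    intro t u
    have h1 : HasDerivAt (fun v => ((t, v) : ℝ × ℝ)) ((0,1) : ℝ × ℝ) u :=
      (hasDerivAt_const u t).prodMk (hasDerivAt_id u)
    have h2 : HasDerivAt (fun v => fderiv ℝ U (t,v))
        (fderiv ℝ (fderiv ℝ U) (t,u) (0,1)) u :=
      (hGdiff (t,u)).hasFDerivAt.comp_hasDerivAt u h1
    simpa [hPdef, hQdefn] using h2.clm_apply (hasDerivAt_const u ((0:ℝ),(1:ℝ)))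
  have hQQ : ∀ t u, deriv (deriv (ρ t)) u = Q t u := by
    intro t u
    have h : deriv (ρ t) = fun v => P t v := funext fun v => hPd t v
    rw [h]
    exact (hQd t u).deriv
  have hT'c : Continuous (fun p : ℝ × ℝ => T' p.1 p.2) :=
    (hsmooth.continuous_fderiv (by simp)).clm_apply continuous_const
  have hPc : Continuous (fun p : ℝ × ℝ => P p.1 p.2) :=
    (hsmooth.continuous_fderiv (by simp)).clm_apply continuous_const
  have hQc : Continuous (fun p : ℝ × ℝ => Q p.1 p.2) :=
    (((hG.continuous_fderiv (by simp)).clm_apply continuous_const).clm_apply continuous_const)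
  have hρtc : ∀ t, Continuous (fun v => ρ t v) := fun t =>
    hUc.comp (continuous_const.prodMk continuous_id)
  -- continuity of sd and S at interior points
  have hsdCA : ∀ a ∈ Set.Ioo (0:ℝ) 1, ContinuousAt sd a :=
    fun a ha => (hsd'D a ha).continuousAt
  have hSCA : ∀ a ∈ Set.Ioo (0:ℝ) 1, ContinuousAt S a :=
    fun a ha => (hsdD a ha).continuousAt
  -- the dissipation functional
  set Ifun : ℝ → ℝ :=
    (fun t => ∫ u in (0:ℝ)..1, (deriv (ρ t) u)^2 / (ρ t u * (1 - ρ t u))) with hIfun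
  have hIP : ∀ t, Ifun t = ∫ u in (0:ℝ)..1, (P t u)^2 / (ρ t u * (1 - ρ t u)) := by
    intro t
    rw [hIfun]
    simp only [hPd]
  -- Integration by parts in space
  have hIBP : ∀ t, 0 ≤ t →
      (∫ u in (0:ℝ)..1, sd (ρ t u) * T' t u) = -(1/2) * Ifun t := by
    intro t ht
    have hgc : Continuous (fun v => ρ t v) := hρtc t
    have hPct : Continuous (fun v => P t v) :=
      hPc.comp (continuous_const.prodMk continuous_id)
    have hQct : Continuous (fun v => Q t v) :=
      hQc.comp (continuous_const.prodMk continuous_id)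
    have hχ : ∀ u ∈ Set.Icc (0:ℝ) 1, ρ t u * (1 - ρ t u) ≠ 0 := by
      intro u hu
      obtain ⟨h1, h2⟩ := hrange t ht u hu
      have : (0:ℝ) < 1 - ρ t u := by linarith
      positivity
    have hsdcomp : ContinuousOn (fun u => sd (ρ t u)) (Set.Icc (0:ℝ) 1) := fun u hu =>
      ((hsdCA _ (hrange t ht u hu)).comp hgc.continuousAt).continuousWithinAt
    have hcont1 : ContinuousOn (fun u => (P t u)^2 / (ρ t u * (1 - ρ t u)))
        (Set.Icc (0:ℝ) 1) :=
      ((hPct.pow 2).continuousOn).div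
        ((hgc.mul (continuous_const.sub hgc)).continuousOn) hχ
    have hcont2 : ContinuousOn (fun u => sd (ρ t u) * Q t u) (Set.Icc (0:ℝ) 1) :=
      hsdcomp.mul hQct.continuousOn
    have huIcc : Set.uIcc (0:ℝ) 1 = Set.Icc (0:ℝ) 1 := Set.uIcc_of_le zero_le_one
    have int1 : IntervalIntegrable (fun u => (P t u)^2 / (ρ t u * (1 - ρ t u))) volume 0 1 :=
      (huIcc ▸ hcont1).intervalIntegrable
    have int2 : IntervalIntegrable (fun u => sd (ρ t u) * Q t u) volume 0 1 :=
      (huIcc ▸ hcont2).intervalIntegrable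
    have hHder : ∀ u ∈ Set.Icc (0:ℝ) 1, HasDerivAt (fun v => sd (ρ t v) * P t v)
        ((P t u)^2 / (ρ t u * (1 - ρ t u)) + sd (ρ t u) * Q t u) u := by
      intro u hu
      have hr := hrange t ht u hu
      have h1 : HasDerivAt (fun v => sd (ρ t v))
          (1/(ρ t u * (1 - ρ t u)) * P t u) u :=
        (hsd'D _ hr).comp u (hdu t u)
      have h2 : HasDerivAt (fun v => sd (ρ t v) * P t v) _ u := h1.mul (hQd t u)
      convert h2 using 1
      have := hχ u hu
      field_simp
    have hFTC : (∫ u in (0:ℝ)..1,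
        ((P t u)^2 / (ρ t u * (1 - ρ t u)) + sd (ρ t u) * Q t u)) =
        sd (ρ t 1) * P t 1 - sd (ρ t 0) * P t 0 := by
      exact intervalIntegral.integral_eq_sub_of_hasDerivAt
        (fun u hu => hHder u (huIcc ▸ hu)) (int1.add int2)
    rw [(hbound t ht).1, (hbound t ht).2, hsdα] at hFTC
    simp only [zero_mul, sub_zero, sub_self] at hFTC
    rw [intervalIntegral.integral_add int1 int2] at hFTC
    have hsplit : (∫ u in (0:ℝ)..1, sd (ρ t u) * Q t u)
        = -∫ u in (0:ℝ)..1, (P t u)^2 / (ρ t u * (1 - ρ t u)) := by linarith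
    have hcong : (∫ u in (0:ℝ)..1, sd (ρ t u) * T' t u)
        = ∫ u in (0:ℝ)..1, (1/2) * (sd (ρ t u) * Q t u) := by
      apply intervalIntegral.integral_congr
      intro u hu
      rw [huIcc] at hu
      show sd (ρ t u) * T' t u = 1/2 * (sd (ρ t u) * Q t u)
      by_cases hu' : u ∈ Set.Ioo (0:ℝ) 1
      · have hh := hheat t ht u hu'
        rw [(hdt t u).deriv] at hh
        rw [hQQ t u] at hh
        rw [hh]; ring
      · have : u = 0 ∨ u = 1 := by
          rcases hu with ⟨h1, h2⟩
          rcases eq_or_lt_of_le h1 with h | h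
          · exact Or.inl h.symm
          · rcases eq_or_lt_of_le h2 with h' | h'
            · exact Or.inr h'
            · exact absurd ⟨h, h'⟩ hu'
        rcases this with h | h <;> rw [h]
        · rw [(hbound t ht).1, hsdα]; ring
        · rw [(hbound t ht).2, hsdα]; ring
    rw [hcong, intervalIntegral.integral_const_mul, hsplit, hIP]
    ring
  -- derivative of the free energy
  have hFd : ∀ t₀, 0 < t₀ →
      HasDerivAt (fun τ => ∫ u in (0:ℝ)..1, S (ρ τ u)) (-(1/2) * Ifun t₀) t₀ := by
    intro t₀ ht₀
    have hε : (0:ℝ) < t₀/2 := by linarith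
    have hballsub : Metric.ball t₀ (t₀/2) ⊆ Set.Icc (t₀/2) (t₀ + t₀/2) := by
      intro x hx
      rw [Metric.mem_ball, Real.dist_eq, abs_sub_lt_iff] at hx
      constructor <;> linarith [hx.1, hx.2]
    have hJpos : ∀ x ∈ Set.Icc (t₀/2) (t₀ + t₀/2), (0:ℝ) ≤ x := by
      intro x hx; linarith [hx.1]
    -- continuity bound on the compact J × [0,1]
    have hK : IsCompact ((Set.Icc (t₀/2) (t₀ + t₀/2)) ×ˢ Set.Icc (0:ℝ) 1) :=
      isCompact_Icc.prod isCompact_Icc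
    have hfc : ContinuousOn (fun p : ℝ × ℝ => sd (ρ p.1 p.2) * T' p.1 p.2)
        ((Set.Icc (t₀/2) (t₀ + t₀/2)) ×ˢ Set.Icc (0:ℝ) 1) := by
      apply ContinuousOn.mul _ hT'c.continuousOn
      intro p hp
      have h := ContinuousAt.comp (x := p) (g := sd) (f := U)
        (hsdCA _ (hrange p.1 (hJpos p.1 hp.1) p.2 hp.2)) hUc.continuousAt
      exact h.continuousWithinAt
    obtain ⟨C, hC⟩ := hK.exists_bound_of_continuousOn hfc
    have huIoc : Set.uIoc (0:ℝ) 1 = Set.Ioc (0:ℝ) 1 := Set.uIoc_of_le zero_le_one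
    have huIcc : Set.uIcc (0:ℝ) 1 = Set.Icc (0:ℝ) 1 := Set.uIcc_of_le zero_le_one
    have hScomp : ∀ τ, 0 ≤ τ → ContinuousOn (fun u => S (ρ τ u)) (Set.Icc (0:ℝ) 1) := by
      intro τ hτ u hu
      exact ((hSCA _ (hrange τ hτ u hu)).comp (hρtc τ).continuousAt).continuousWithinAt
    have hsdTcomp : ∀ τ, 0 ≤ τ →
        ContinuousOn (fun u => sd (ρ τ u) * T' τ u) (Set.Icc (0:ℝ) 1) := by
      intro τ hτ
      apply ContinuousOn.mul
      · intro u hu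
        exact ((hsdCA _ (hrange τ hτ u hu)).comp (hρtc τ).continuousAt).continuousWithinAt
      · exact (hT'c.comp (continuous_const.prodMk continuous_id)).continuousOn
    have key := (intervalIntegral.hasDerivAt_integral_of_dominated_loc_of_deriv_le
      (F := fun τ u => S (ρ τ u)) (F' := fun τ u => sd (ρ τ u) * T' τ u)
      (bound := fun _ => C) (μ := volume) (a := 0) (b := 1) (x₀ := t₀) (Metric.ball_mem_nhds t₀ hε)
      ?_ ?_ ?_ ?_ ?_ ?_).2
    · rw [hIBP t₀ ht₀.le] at key
      exact key
    · filter_upwards [isOpen_Ioi.eventually_mem (Set.mem_Ioi.2 ht₀)] with τ hτ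
      rw [huIoc]
      exact (((hScomp τ (le_of_lt hτ)).mono Set.Ioc_subset_Icc_self).aestronglyMeasurable
        measurableSet_Ioc)
    · exact (huIcc ▸ hScomp t₀ ht₀.le).intervalIntegrable
    · rw [huIoc]
      exact (((hsdTcomp t₀ ht₀.le).mono Set.Ioc_subset_Icc_self).aestronglyMeasurable
        measurableSet_Ioc)
    · apply Filter.Eventually.of_forall
      intro u hu τ hτ
      rw [huIoc] at hu
      exact hC (τ, u) ⟨hballsub hτ, Set.Ioc_subset_Icc_self hu⟩
    · exact intervalIntegrable_const
    · apply Filter.Eventually.of_forall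
      intro u hu τ hτ
      rw [huIoc] at hu
      have hτ0 : (0:ℝ) ≤ τ := hJpos τ (hballsub hτ)
      have hr := hrange τ hτ0 u (Set.Ioc_subset_Icc_self hu)
      exact (hsdD _ hr).comp τ (hdt τ u)
  -- FTC in time on [0, Tb]
  have key : ∀ Tb, (0:ℝ) ≤ Tb →
      (∫ t in (0:ℝ)..Tb, (-(1/2) * Ifun t)) =
      (∫ u in (0:ℝ)..1, S (ρ Tb u)) - (∫ u in (0:ℝ)..1, S (ρ 0 u)) := by
    intro Tb hTb
    -- continuity of F on [0, Tb] via clamping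
    have hK'c : IsCompact (U '' ((Set.Icc (0:ℝ) Tb) ×ˢ Set.Icc (0:ℝ) 1)) :=
      (isCompact_Icc.prod isCompact_Icc).image hUc
    have hK'sub : (U '' ((Set.Icc (0:ℝ) Tb) ×ˢ Set.Icc (0:ℝ) 1)) ⊆ Set.Ioo 0 1 := by
      rintro x ⟨p, hp, rfl⟩
      exact hrange p.1 hp.1.1 p.2 hp.2
    have hne : (U '' ((Set.Icc (0:ℝ) Tb) ×ˢ Set.Icc (0:ℝ) 1)).Nonempty := by
      refine ⟨U (0,0), Set.mem_image_of_mem _ ?_⟩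
      exact ⟨⟨le_refl 0, hTb⟩, ⟨le_refl 0, zero_le_one⟩⟩
    obtain ⟨m, hmK, hm⟩ := hK'c.exists_isLeast hne
    obtain ⟨M, hMK, hM⟩ := hK'c.exists_isGreatest hne
    have hm0 : (0:ℝ) < m := (hK'sub hmK).1
    have hM1 : M < 1 := (hK'sub hMK).2
    have hmM : m ≤ M := hM hmK
    have hclmem : ∀ a : ℝ, max m (min M a) ∈ Set.Icc m M := by
      intro a
      constructor
      · exact le_max_left _ _
      · exact max_le hmM (min_le_left _ _)
    have hclIoo : ∀ a : ℝ, max m (min M a) ∈ Set.Ioo (0:ℝ) 1 := by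
      intro a
      exact ⟨lt_of_lt_of_le hm0 (hclmem a).1, lt_of_le_of_lt (hclmem a).2 hM1⟩
    have hclc : Continuous (fun a : ℝ => max m (min M a)) :=
      continuous_const.max (continuous_const.min continuous_id)
    have hScl : Continuous (fun a : ℝ => S (max m (min M a))) := by
      rw [continuous_iff_continuousAt]
      intro a
      exact ContinuousAt.comp (x := a) (g := S) (f := fun a : ℝ => max m (min M a))
        (hSCA _ (hclIoo a)) hclc.continuousAt
    have hFcl : Continuous (fun τ => ∫ u in (0:ℝ)..1, S (max m (min M (ρ τ u)))) := by
      apply intervalIntegral.continuous_parametric_intervalIntegral_of_continuous'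
        (f := fun τ u => S (max m (min M (ρ τ u))))
      exact hScl.comp hUc
    have hFcont : ContinuousOn (fun τ => ∫ u in (0:ℝ)..1, S (ρ τ u)) (Set.Icc 0 Tb) := by
      apply hFcl.continuousOn.congr
      intro τ hτ
      apply intervalIntegral.integral_congr
      intro u hu
      rw [Set.uIcc_of_le zero_le_one] at hu
      have hmem : ρ τ u ∈ U '' ((Set.Icc (0:ℝ) Tb) ×ˢ Set.Icc (0:ℝ) 1) :=
        ⟨(τ, u), ⟨hτ, hu⟩, rfl⟩
      have h1 : min M (ρ τ u) = ρ τ u := min_eq_right (hM hmem)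
      have h2 : max m (ρ τ u) = ρ τ u := max_eq_right (hm hmem)
      show S (ρ τ u) = S (max m (min M (ρ τ u)))
      rw [h1, h2]
    have hintT : IntervalIntegrable (fun t => -(1/2) * Ifun t) volume 0 Tb := by
      rw [intervalIntegrable_iff, Set.uIoc_of_le hTb]
      exact (hint.mono_set Set.Ioc_subset_Ioi_self).const_mul _
    exact intervalIntegral.integral_eq_sub_of_hasDeriv_right_of_le hTb hFcont
      (fun x hx => (hFd x hx.1).hasDerivWithinAt) hintT
  -- limits as Tb → ∞
  set A : ℝ := ∫ t in Set.Ioi (0:ℝ), Ifun t with hA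
  have lim0 : Filter.Tendsto (fun Tb => ∫ t in (0:ℝ)..Tb, Ifun t)
      Filter.atTop (nhds A) :=
    intervalIntegral_tendsto_integral_Ioi 0 hint Filter.tendsto_id
  have limF : Filter.Tendsto (fun Tb => ∫ u in (0:ℝ)..1, S (ρ Tb u))
      Filter.atTop (nhds ((∫ u in (0:ℝ)..1, S (ρ 0 u)) + (-(1/2) * A))) := by
    have h1 : Filter.Tendsto
        (fun Tb => (∫ u in (0:ℝ)..1, S (ρ 0 u)) + (-(1/2)) * ∫ t in (0:ℝ)..Tb, Ifun t)
        Filter.atTop (nhds ((∫ u in (0:ℝ)..1, S (ρ 0 u)) + (-(1/2) * A))) :=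
      tendsto_const_nhds.add (lim0.const_mul _)
    apply h1.congr'
    filter_upwards [Filter.eventually_ge_atTop (0:ℝ)] with Tb hTb
    have := key Tb hTb
    rw [intervalIntegral.integral_const_mul] at this
    linarith
  have limF0 : Filter.Tendsto (fun Tb => ∫ u in (0:ℝ)..1, S (ρ Tb u))
      Filter.atTop (nhds 0) := by
    rw [Metric.tendsto_nhds]
    intro ε hε
    have hSca : ContinuousAt S αbar := hSCA αbar ⟨hα0, hα1⟩
    obtain ⟨δ, hδ0, hδ⟩ := Metric.continuousAt_iff.1 hSca (ε/2) (by linarith)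
    have hconvδ := Metric.tendstoUniformlyOn_iff.1 hconv δ hδ0
    filter_upwards [hconvδ] with Tb hTb
    have hbnd : ∀ u ∈ Set.uIoc (0:ℝ) 1, ‖S (ρ Tb u)‖ ≤ ε/2 := by
      intro u hu
      rw [Set.uIoc_of_le zero_le_one] at hu
      have h1 := hTb u (Set.Ioc_subset_Icc_self hu)
      have h2 : dist (ρ Tb u) αbar < δ := by
        rw [dist_comm]; exact h1
      have h3 := hδ h2
      rw [hSα] at h3
      rw [Real.dist_eq, sub_zero] at h3
      rw [Real.norm_eq_abs]
      linarith
    have hle := intervalIntegral.norm_integral_le_of_norm_le_const hbnd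
    rw [Real.dist_eq, sub_zero]
    calc |∫ u in (0:ℝ)..1, S (ρ Tb u)| ≤ ε/2 * |1 - 0| := hle
    _ < ε := by rw [sub_zero, abs_one, mul_one]; linarith
  have hfinal : (∫ u in (0:ℝ)..1, S (ρ 0 u)) + (-(1/2) * A) = 0 :=
    tendsto_nhds_unique limF limF0
  show (1/2) * A = ∫ u in (0:ℝ)..1, S (ρ 0 u)
  linarith
end

section
/- Let ρ : (0,1) → (0,1) and φ : (0,1) → ℝ be smooth with φ' never vanishing and satisfying φ''/(φ')² + 1/(1+e^φ) = ρ. Then the Hamilton–Jacobi integrand identity holds: ∫₀¹ [ −(∂_uρ)(∂_uφ) + ρ(1-ρ)(∂_uφ)² ] du = ∫₀¹ (ρ − e^φ/(1+e^φ)) [ ∂_u²φ + (∂_uφ)²/(1+e^φ) − ρ(∂_uφ)² ] du + boundary terms, and under the boundary conditions ρ(0) = e^{φ(0)}/(1+e^{φ(0)}), ρ(1) = e^{φ(1)}/(1+e^{φ(1)}) the boundary terms vanish, so the left-hand side is zero. -/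
open Real

/-- Hamilton–Jacobi identity: if `φ''/(φ')² + 1/(1+e^φ) = ρ` on `(0,1)` and
`ρ = e^φ/(1+e^φ)` at the two boundary points, then
`∫₀¹ [−ρ'φ' + ρ(1-ρ)(φ')²] du = 0`, the integrand factoring as
`(ρ − e^φ/(1+e^φ))` times the ODE expression after integration by parts. -/
theorem stmt_18 (ρ φ : ℝ → ℝ)
    (hρsmooth : ContDiff ℝ 1 ρ) (hφsmooth : ContDiff ℝ 2 φ)
    (hρrange : ∀ u ∈ Set.Ioo (0:ℝ) 1, ρ u ∈ Set.Ioo (0:ℝ) 1)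
    (hφ' : ∀ u ∈ Set.Ioo (0:ℝ) 1, deriv φ u ≠ 0)
    (hODE : ∀ u ∈ Set.Ioo (0:ℝ) 1,
      deriv (deriv φ) u / (deriv φ u)^2 + 1 / (1 + exp (φ u)) = ρ u)
    (hbd0 : ρ 0 = exp (φ 0) / (1 + exp (φ 0)))
    (hbd1 : ρ 1 = exp (φ 1) / (1 + exp (φ 1))) :
    (∫ u in (0:ℝ)..1,
        (-(deriv ρ u) * deriv φ u + ρ u * (1 - ρ u) * (deriv φ u)^2))
      = (∫ u in (0:ℝ)..1,
          (ρ u - exp (φ u) / (1 + exp (φ u)))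
            * (deriv (deriv φ) u + (deriv φ u)^2 / (1 + exp (φ u))
                - ρ u * (deriv φ u)^2)) ∧
    (∫ u in (0:ℝ)..1,
        (-(deriv ρ u) * deriv φ u + ρ u * (1 - ρ u) * (deriv φ u)^2)) = 0 := by
  have hne : ∀ u : ℝ, (1:ℝ) + exp (φ u) ≠ 0 := fun u => by positivity
  set L : ℝ → ℝ := fun u =>
    -(deriv ρ u) * deriv φ u + ρ u * (1 - ρ u) * (deriv φ u)^2 with hL
  set R : ℝ → ℝ := fun u =>
    (ρ u - exp (φ u) / (1 + exp (φ u)))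
      * (deriv (deriv φ) u + (deriv φ u)^2 / (1 + exp (φ u))
          - ρ u * (deriv φ u)^2) with hR
  -- differentiability facts
  have hρd : Differentiable ℝ ρ := hρsmooth.differentiable one_ne_zero
  have hφd : Differentiable ℝ φ := hφsmooth.differentiable (by norm_num)
  have hφ2 : ContDiff ℝ 1 (deriv φ) := by
    have : ContDiff ℝ ((1:ℕ)+1) φ := by exact_mod_cast hφsmooth
    exact (contDiff_succ_iff_deriv.mp this).2.2
  have hρ'c : Continuous (deriv ρ) := hρsmooth.continuous_deriv le_rfl
  have hφ'c : Continuous (deriv φ) := hφ2.continuous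
  have hφ''c : Continuous (deriv (deriv φ)) := hφ2.continuous_deriv le_rfl
  have hLc : Continuous L := by
    apply Continuous.add
    · exact (hρ'c.neg.mul hφ'c)
    · exact ((hρd.continuous.mul (continuous_const.sub hρd.continuous)).mul (hφ'c.pow 2))
  have hexpc : Continuous fun u => exp (φ u) := Real.continuous_exp.comp hφd.continuous
  have hRc : Continuous R := by
    apply Continuous.mul
    · exact hρd.continuous.sub (hexpc.div (continuous_const.add hexpc) hne)
    · exact ((hφ''c.add (((hφ'c.pow 2)).div (continuous_const.add hexpc) hne)).sub
        (hρd.continuous.mul (hφ'c.pow 2)))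
  -- R vanishes on (0,1)
  have hR0 : ∀ u ∈ Set.Ioo (0:ℝ) 1, R u = 0 := by
    intro u hu
    have h1 := hODE u hu
    have h2 := hφ' u hu
    have : deriv (deriv φ) u + (deriv φ u)^2 / (1 + exp (φ u)) - ρ u * (deriv φ u)^2
        = (deriv φ u)^2 * (deriv (deriv φ) u / (deriv φ u)^2 + 1 / (1 + exp (φ u)) - ρ u) := by
      field_simp
    simp only [hR, this, h1, sub_self, mul_zero]
  have hRint : ∫ u in (0:ℝ)..1, R u = 0 := by
    rw [intervalIntegral.integral_of_le (by norm_num : (0:ℝ) ≤ 1),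
      MeasureTheory.integral_Ioc_eq_integral_Ioo,
      MeasureTheory.setIntegral_congr_fun measurableSet_Ioo hR0]
    simp
  -- exact derivative
  have key : ∀ u : ℝ, HasDerivAt
      (fun u => -((ρ u - exp (φ u) / (1 + exp (φ u))) * deriv φ u)) (L u - R u) u := by
    intro u
    have Hρ : HasDerivAt ρ (deriv ρ u) u := (hρd u).hasDerivAt
    have Hφ : HasDerivAt φ (deriv φ u) u := (hφd u).hasDerivAt
    have Hφ2 : HasDerivAt (deriv φ) (deriv (deriv φ) u) u :=
      ((hφ2.differentiable one_ne_zero) u).hasDerivAt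
    have He : HasDerivAt (fun u => exp (φ u)) (exp (φ u) * deriv φ u) u := Hφ.exp
    have Hd : HasDerivAt (fun u => 1 + exp (φ u)) (exp (φ u) * deriv φ u) u :=
      He.const_add 1
    have Hh := He.div Hd (hne u)
    have HG := ((Hρ.sub Hh).mul Hφ2).neg
    refine HG.congr_deriv ?_
    simp only [L, R, Pi.sub_apply, Pi.div_apply]
    field_simp
    ring
  have hG0 : -((ρ 0 - exp (φ 0) / (1 + exp (φ 0))) * deriv φ 0) = 0 := by
    rw [hbd0]; ring
  have hG1 : -((ρ 1 - exp (φ 1) / (1 + exp (φ 1))) * deriv φ 1) = 0 := by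
    rw [hbd1]; ring
  have hLR : ∫ u in (0:ℝ)..1, (L u - R u) = 0 := by
    rw [intervalIntegral.integral_eq_sub_of_hasDerivAt (fun u _ => key u)
      ((hLc.sub hRc).intervalIntegrable 0 1), hG0, hG1, sub_zero]
  have hsub : (∫ u in (0:ℝ)..1, L u) - ∫ u in (0:ℝ)..1, R u
      = ∫ u in (0:ℝ)..1, (L u - R u) :=
    (intervalIntegral.integral_sub (hLc.intervalIntegrable 0 1)
      (hRc.intervalIntegrable 0 1)).symm
  have hLeq : (∫ u in (0:ℝ)..1, L u) = ∫ u in (0:ℝ)..1, R u := by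
    have := hsub.trans hLR
    linarith
  exact ⟨hLeq, by rw [hLeq, hRint]⟩
end

section
/- For any q ∈ ℝ and m ∈ (0,1), the function Φ_m defined as the lower semicontinuous envelope of q ↦ inf over T > 0 of (1/T)·inf over current paths with time average q of the dynamical rate functional, satisfies: Φ_m is convex. In the simplified setting: if f : ℝ → [0,∞] satisfies f(q) = inf_{T>0} (1/T) g_T(q) where each g_T is convex and g_{T+S}(q) ≤ inf_{λ∈[0,1], λq₁+(1-λ)q₂=q, λ(T+S)=T} [g_T(q₁) + g_S(q₂)] (subadditivity under concatenation of paths), then the lower semicontinuous envelope of f is convex. -/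
open Filter Topology

set_option maxHeartbeats 1000000

/-- Lower semicontinuity is preserved by positive affine transformations
composed with a continuous map. -/
private lemma lsc_affine_comp (Φ : ℝ → ℝ) (hΦ : LowerSemicontinuous Φ)
    (a b : ℝ) (ha : 0 < a) (L : ℝ → ℝ) (hL : Continuous L) :
    LowerSemicontinuous (fun x => a * Φ (L x) + b) := by
  intro x c hc
  have hc' : c < a * Φ (L x) + b := hc
  have h1 : (c - b) / a < Φ (L x) := by
    rw [div_lt_iff₀ ha]
    nlinarith [hc']
  have h2 := hΦ (L x) _ h1
  have h3 : Filter.Tendsto L (𝓝 x) (𝓝 (L x)) := hL.continuousAt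
  filter_upwards [h3.eventually h2] with y hy
  rw [gt_iff_lt, div_lt_iff₀ ha] at hy
  show c < a * Φ (L y) + b
  nlinarith

/-- Repetition bound: `g (n*T) x ≤ n * g T x` for `n ≥ 1`. -/
private lemma rep_bound (g : ℝ → ℝ → ℝ)
    (hconcat : ∀ T > (0:ℝ), ∀ S > (0:ℝ), ∀ q₁ q₂ : ℝ,
      g (T + S) ((T * q₁ + S * q₂) / (T + S)) ≤ g T q₁ + g S q₂)
    (T : ℝ) (hT : 0 < T) (x : ℝ) :
    ∀ n : ℕ, 1 ≤ n → g (n * T) x ≤ n * g T x := by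
  intro n hn
  induction n, hn using Nat.le_induction with
  | base => simp
  | succ n hn ih =>
    have hnT : 0 < (n : ℝ) * T := by
      have : (1:ℝ) ≤ n := by exact_mod_cast hn
      nlinarith
    have h := hconcat ((n:ℝ) * T) hnT T hT x x
    have harg : ((n:ℝ) * T * x + T * x) / ((n:ℝ) * T + T) = x := by
      have hne : (n:ℝ) * T + T ≠ 0 := by positivity
      field_simp
    rw [harg] at h
    have heq : ((n:ℕ) + 1 : ℝ) * T = (n:ℝ) * T + T := by ring
    push_cast
    rw [heq]
    nlinarith [ih]

/-- Convexity of the rate function for the time-averaged current: if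
`f(q) = inf_{T>0} (1/T) g_T(q)` where each `g_T` is convex, nonnegative, and
subadditive under concatenation of paths
(`g_{T+S}((Tq₁+Sq₂)/(T+S)) ≤ g_T(q₁) + g_S(q₂)`), then the lower
semicontinuous envelope of `f` is convex. -/
theorem stmt_19 (g : ℝ → ℝ → ℝ) (f Φ : ℝ → ℝ)
    (hg0 : ∀ T q, 0 ≤ g T q)
    (hgconv : ∀ T > (0:ℝ), ConvexOn ℝ Set.univ (g T))
    (hconcat : ∀ T > (0:ℝ), ∀ S > (0:ℝ), ∀ q₁ q₂ : ℝ,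
      g (T + S) ((T * q₁ + S * q₂) / (T + S)) ≤ g T q₁ + g S q₂)
    (hf : ∀ q, f q = ⨅ T : {T : ℝ // 0 < T}, (1 / T.1) * g T.1 q)
    -- Φ is the lower semicontinuous envelope of f
    (hΦlsc : LowerSemicontinuous Φ)
    (hΦle : Φ ≤ f)
    (hΦmax : ∀ h : ℝ → ℝ, LowerSemicontinuous h → h ≤ f → h ≤ Φ) :
    ConvexOn ℝ Set.univ Φ := by
  -- the infimum defining f is over a set bounded below by 0
  have hbdd : ∀ q : ℝ, BddBelow (Set.range fun T : {T : ℝ // 0 < T} => (1 / T.1) * g T.1 q) := by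
    intro q
    refine ⟨0, ?_⟩
    rintro _ ⟨⟨T, hT⟩, rfl⟩
    have := hg0 T q
    positivity
  -- f z ≤ (1/(A+B)) g_{A+B} z for any A,B>0
  have hfle : ∀ (A : ℝ), 0 < A → ∀ z, f z ≤ (1 / A) * g A z := by
    intro A hA z
    rw [hf z]
    exact ciInf_le (hbdd z) ⟨A, hA⟩
  -- main chain inequality
  have hchain : ∀ T > (0:ℝ), ∀ S > (0:ℝ), ∀ x y : ℝ, ∀ n m : ℕ, 1 ≤ n → 1 ≤ m →
      f (((n:ℝ) * T * x + (m:ℝ) * S * y) / ((n:ℝ) * T + (m:ℝ) * S)) ≤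
        ((n:ℝ) * g T x + (m:ℝ) * g S y) / ((n:ℝ) * T + (m:ℝ) * S) := by
    intro T hT S hS x y n m hn hm
    have hn1 : (1:ℝ) ≤ n := by exact_mod_cast hn
    have hm1 : (1:ℝ) ≤ m := by exact_mod_cast hm
    have hA : 0 < (n:ℝ) * T := by nlinarith
    have hB : 0 < (m:ℝ) * S := by nlinarith
    have hD : 0 < (n:ℝ) * T + (m:ℝ) * S := by linarith
    have h1 := hfle ((n:ℝ) * T + (m:ℝ) * S) hD
      (((n:ℝ) * T * x + (m:ℝ) * S * y) / ((n:ℝ) * T + (m:ℝ) * S))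
    have h2 := hconcat ((n:ℝ) * T) hA ((m:ℝ) * S) hB x y
    have h3 := rep_bound g hconcat T hT x n hn
    have h4 := rep_bound g hconcat S hS y m hm
    calc f (((n:ℝ) * T * x + (m:ℝ) * S * y) / ((n:ℝ) * T + (m:ℝ) * S))
        ≤ (1 / ((n:ℝ) * T + (m:ℝ) * S)) * g ((n:ℝ) * T + (m:ℝ) * S)
            (((n:ℝ) * T * x + (m:ℝ) * S * y) / ((n:ℝ) * T + (m:ℝ) * S)) := h1
      _ ≤ (1 / ((n:ℝ) * T + (m:ℝ) * S)) * (g ((n:ℝ) * T) x + g ((m:ℝ) * S) y) := by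
          apply mul_le_mul_of_nonneg_left h2 (by positivity)
      _ ≤ (1 / ((n:ℝ) * T + (m:ℝ) * S)) * ((n:ℝ) * g T x + (m:ℝ) * g S y) := by
          apply mul_le_mul_of_nonneg_left (by linarith) (by positivity)
      _ = ((n:ℝ) * g T x + (m:ℝ) * g S y) / ((n:ℝ) * T + (m:ℝ) * S) := by ring
  -- key step: Φ(l x + (1-l) y) ≤ l f x + (1-l) f y for l ∈ (0,1)
  have key : ∀ x y l : ℝ, 0 < l → l < 1 →
      Φ (l * x + (1 - l) * y) ≤ l * f x + (1 - l) * f y := by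
    intro x y l hl0 hl1
    -- reduce to: for all ε > 0
    have main : ∀ ε > (0:ℝ), Φ (l * x + (1 - l) * y) ≤ l * (f x + ε) + (1 - l) * (f y + ε) := by
      intro ε hε
      -- choose good T, S
      obtain ⟨⟨T, hT⟩, hTg⟩ : ∃ T : {T : ℝ // 0 < T}, (1 / T.1) * g T.1 x < f x + ε := by
        apply exists_lt_of_ciInf_lt
        rw [← hf x]; linarith
      obtain ⟨⟨S, hS⟩, hSg⟩ : ∃ S : {S : ℝ // 0 < S}, (1 / S.1) * g S.1 y < f y + ε := by
        apply exists_lt_of_ciInf_lt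
        rw [← hf y]; linarith
      set a := (1 / T) * g T x with ha_def
      set b := (1 / S) * g S y with hb_def
      -- the ratio c and the integer sequence
      set c : ℝ := l * S / ((1 - l) * T) with hc_def
      have hc : 0 < c := by
        apply div_pos (by positivity)
        apply mul_pos (by linarith) hT
      set N : ℕ → ℕ := fun k => ⌈((k:ℝ) + 1) * c⌉₊ with hN_def
      have hN1 : ∀ k, 1 ≤ N k := by
        intro k
        apply Nat.one_le_ceil_iff.mpr
        positivity
      set r : ℕ → ℝ := fun k => (N k : ℝ) / ((k:ℝ) + 1) with hr_def
      have hr_lb : ∀ k, c ≤ r k := by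
        intro k
        rw [hr_def]
        rw [le_div_iff₀ (by positivity)]
        calc c * ((k:ℝ) + 1) = ((k:ℝ) + 1) * c := by ring
          _ ≤ (N k : ℝ) := Nat.le_ceil _
      have hr_ub : ∀ k, r k ≤ c + 1 / ((k:ℝ) + 1) := by
        intro k
        rw [hr_def, div_le_iff₀ (by positivity)]
        have := (Nat.ceil_lt_add_one (by positivity : (0:ℝ) ≤ ((k:ℝ) + 1) * c)).le
        calc (N k : ℝ) ≤ ((k:ℝ) + 1) * c + 1 := this
          _ = (c + 1 / ((k:ℝ) + 1)) * ((k:ℝ) + 1) := by field_simp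
      have hr_tendsto : Tendsto r atTop (𝓝 c) := by
        have h1 : Tendsto (fun _ : ℕ => c) atTop (𝓝 c) := tendsto_const_nhds
        have h2 : Tendsto (fun k : ℕ => c + 1 / ((k:ℝ) + 1)) atTop (𝓝 c) := by
          have := tendsto_one_div_add_atTop_nhds_zero_nat (𝕜 := ℝ)
          have h3 := tendsto_const_nhds (x := c) (f := atTop (α := ℕ)).add this
          simpa using h3
        exact tendsto_of_tendsto_of_tendsto_of_le_of_le h1 h2 hr_lb hr_ub
      -- the mixing coefficients
      set μ : ℕ → ℝ := fun k => ((N k : ℝ) * T) / ((N k : ℝ) * T + ((k:ℝ) + 1) * S) with hμ_def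
      have hDk : ∀ k, 0 < (N k : ℝ) * T + ((k:ℝ) + 1) * S := by
        intro k
        have : (1:ℝ) ≤ (N k : ℝ) := by exact_mod_cast hN1 k
        nlinarith
      have hμ_eq : ∀ k, μ k = (r k * T) / (r k * T + S) := by
        intro k
        rw [hμ_def, hr_def]
        have hk1 : ((k:ℝ) + 1) ≠ 0 := by positivity
        have hD := (hDk k).ne'
        have hQ : (N k : ℝ) / ((k:ℝ) + 1) * T + S ≠ 0 := by positivity
        rw [div_eq_div_iff hD hQ]
        field_simp
      have hcTS : 0 < c * T + S := by positivity
      have hlim : c * T / (c * T + S) = l := by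
        have h1l : (1:ℝ) - l ≠ 0 := by linarith
        rw [div_eq_iff hcTS.ne', hc_def]
        field_simp
        ring
      have hμ_tendsto : Tendsto μ atTop (𝓝 l) := by
        have h1 : Tendsto (fun k => r k * T) atTop (𝓝 (c * T)) := hr_tendsto.mul_const T
        have h2 : Tendsto (fun k => r k * T + S) atTop (𝓝 (c * T + S)) := h1.add_const S
        have h3 := h1.div h2 hcTS.ne'
        rw [hlim] at h3
        convert h3 using 1
        funext k
        exact hμ_eq k
      -- pointwise bound on f along the sequence
      have hμ_mem : ∀ k, 0 ≤ μ k ∧ μ k ≤ 1 := by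
        intro k
        constructor
        · rw [hμ_def]
          have := hDk k
          have hNk : (1:ℝ) ≤ (N k : ℝ) := by exact_mod_cast hN1 k
          positivity
        · rw [hμ_def, div_le_one (hDk k)]
          nlinarith [hDk k]
      have hfk : ∀ k, f (μ k * x + (1 - μ k) * y) ≤ μ k * a + (1 - μ k) * b := by
        intro k
        have hNk : (1:ℝ) ≤ (N k : ℝ) := by exact_mod_cast hN1 k
        have hk1 : (1:ℕ) ≤ k + 1 := by omega
        have hch := hchain T hT S hS x y (N k) (k + 1) (hN1 k) hk1
        push_cast at hch
        have hD := hDk k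
        have harg : μ k * x + (1 - μ k) * y =
            ((N k : ℝ) * T * x + ((k:ℝ) + 1) * S * y) / ((N k : ℝ) * T + ((k:ℝ) + 1) * S) := by
          rw [hμ_def]
          field_simp
          ring
        have hval : μ k * a + (1 - μ k) * b =
            ((N k : ℝ) * g T x + ((k:ℝ) + 1) * g S y) / ((N k : ℝ) * T + ((k:ℝ) + 1) * S) := by
          rw [hμ_def, ha_def, hb_def]
          field_simp
          try ring
        rw [harg, hval]
        exact hch
      -- limit of the right-hand side
      have hRHS : Tendsto (fun k => μ k * a + (1 - μ k) * b) atTop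
          (𝓝 (l * a + (1 - l) * b)) := by
        have h1 : Tendsto (fun k => μ k * a) atTop (𝓝 (l * a)) := hμ_tendsto.mul_const a
        have h2 : Tendsto (fun k => (1 - μ k) * b) atTop (𝓝 ((1 - l) * b)) :=
          ((tendsto_const_nhds.sub hμ_tendsto).mul_const b)
        exact h1.add h2
      -- the sequence of points converges
      have hz : Tendsto (fun k => μ k * x + (1 - μ k) * y) atTop
          (𝓝 (l * x + (1 - l) * y)) := by
        have h1 : Tendsto (fun k => μ k * x) atTop (𝓝 (l * x)) := hμ_tendsto.mul_const x
        have h2 : Tendsto (fun k => (1 - μ k) * y) atTop (𝓝 ((1 - l) * y)) :=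
          ((tendsto_const_nhds.sub hμ_tendsto).mul_const y)
        exact h1.add h2
      -- lower semicontinuity argument
      have hΦbound : Φ (l * x + (1 - l) * y) ≤ l * a + (1 - l) * b := by
        by_contra hcon
        push_neg at hcon
        set R := l * a + (1 - l) * b with hR_def
        set cmid := (R + Φ (l * x + (1 - l) * y)) / 2 with hcmid_def
        have hcmid1 : R < cmid := by rw [hcmid_def]; linarith
        have hcmid2 : cmid < Φ (l * x + (1 - l) * y) := by rw [hcmid_def]; linarith
        have hev := hΦlsc (l * x + (1 - l) * y) cmid hcmid2
        have hev2 := hz.eventually hev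
        have hev3 : ∀ᶠ k in atTop, cmid < μ k * a + (1 - μ k) * b := by
          filter_upwards [hev2] with k hk
          calc cmid < Φ (μ k * x + (1 - μ k) * y) := hk
            _ ≤ f (μ k * x + (1 - μ k) * y) := hΦle _
            _ ≤ μ k * a + (1 - μ k) * b := hfk k
        have : cmid ≤ R := ge_of_tendsto hRHS (hev3.mono fun k hk => hk.le)
        linarith
      calc Φ (l * x + (1 - l) * y) ≤ l * a + (1 - l) * b := hΦbound
        _ ≤ l * (f x + ε) + (1 - l) * (f y + ε) := by nlinarith [hTg, hSg]
    -- let ε → 0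
    by_contra hcon
    push_neg at hcon
    set ε := (Φ (l * x + (1 - l) * y) - (l * f x + (1 - l) * f y)) / 2 with hε_def
    have hε : 0 < ε := by rw [hε_def]; linarith
    have := main ε hε
    rw [hε_def] at this
    nlinarith
  -- bootstrap step 1: replace f x by Φ x on the right-hand side
  have key2 : ∀ x y l : ℝ, 0 < l → l < 1 →
      Φ (l * x + (1 - l) * y) ≤ l * Φ x + (1 - l) * f y := by
    intro x y l hl0 hl1
    have hlne : l ≠ 0 := hl0.ne'
    have hlsc : LowerSemicontinuous
        (fun x' : ℝ => (1 / l) * Φ (l * x' + (1 - l) * y) + (-((1 - l) * f y) / l)) :=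
      lsc_affine_comp Φ hΦlsc (1 / l) (-((1 - l) * f y) / l) (by positivity)
        (fun x' => l * x' + (1 - l) * y) (by continuity)
    have hhle : (fun x' : ℝ => (1 / l) * Φ (l * x' + (1 - l) * y) + (-((1 - l) * f y) / l)) ≤ f := by
      intro x'
      have hk := key x' y l hl0 hl1
      show (1 / l) * Φ (l * x' + (1 - l) * y) + (-((1 - l) * f y) / l) ≤ f x'
      have heq : (1 / l) * Φ (l * x' + (1 - l) * y) + (-((1 - l) * f y) / l)
          = (Φ (l * x' + (1 - l) * y) - (1 - l) * f y) / l := by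
        field_simp
        ring
      rw [heq, div_le_iff₀ hl0]
      nlinarith [hk]
    have h3 := hΦmax _ hlsc hhle x
    have h3' : (1 / l) * Φ (l * x + (1 - l) * y) + (-((1 - l) * f y) / l) ≤ Φ x := h3
    have heq : (1 / l) * Φ (l * x + (1 - l) * y) + (-((1 - l) * f y) / l)
        = (Φ (l * x + (1 - l) * y) - (1 - l) * f y) / l := by
      field_simp
      ring
    rw [heq, div_le_iff₀ hl0] at h3'
    nlinarith [h3']
  -- bootstrap step 2: replace f y by Φ y
  have key3 : ∀ x y l : ℝ, 0 < l → l < 1 →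
      Φ (l * x + (1 - l) * y) ≤ l * Φ x + (1 - l) * Φ y := by
    intro x y l hl0 hl1
    have h1l : 0 < 1 - l := by linarith
    have hlsc : LowerSemicontinuous
        (fun y' : ℝ => (1 / (1 - l)) * Φ (l * x + (1 - l) * y') + (-(l * Φ x) / (1 - l))) :=
      lsc_affine_comp Φ hΦlsc (1 / (1 - l)) (-(l * Φ x) / (1 - l)) (by positivity)
        (fun y' => l * x + (1 - l) * y') (by continuity)
    have hhle : (fun y' : ℝ => (1 / (1 - l)) * Φ (l * x + (1 - l) * y')
        + (-(l * Φ x) / (1 - l))) ≤ f := by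
      intro y'
      have hk := key2 x y' l hl0 hl1
      show (1 / (1 - l)) * Φ (l * x + (1 - l) * y') + (-(l * Φ x) / (1 - l)) ≤ f y'
      have heq : (1 / (1 - l)) * Φ (l * x + (1 - l) * y') + (-(l * Φ x) / (1 - l))
          = (Φ (l * x + (1 - l) * y') - l * Φ x) / (1 - l) := by
        field_simp
        ring
      rw [heq, div_le_iff₀ h1l]
      nlinarith [hk]
    have h3 := hΦmax _ hlsc hhle y
    have h3' : (1 / (1 - l)) * Φ (l * x + (1 - l) * y) + (-(l * Φ x) / (1 - l)) ≤ Φ y := h3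
    have heq : (1 / (1 - l)) * Φ (l * x + (1 - l) * y) + (-(l * Φ x) / (1 - l))
        = (Φ (l * x + (1 - l) * y) - l * Φ x) / (1 - l) := by
      field_simp
      ring
    rw [heq, div_le_iff₀ h1l] at h3'
    nlinarith [h3']
  -- conclude convexity
  refine ⟨convex_univ, ?_⟩
  intro x _ y _ p q hp hq hpq
  simp only [smul_eq_mul]
  rcases eq_or_lt_of_le hp with hp0 | hp0
  · have hq1 : q = 1 := by linarith
    rw [← hp0, hq1]
    simp
  · rcases eq_or_lt_of_le hq with hq0 | hq0
    · have hp1 : p = 1 := by linarith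
      rw [← hq0, hp1]
      simp
    · have hq' : q = 1 - p := by linarith
      rw [hq']
      exact key3 x y p hp0 (by linarith)
end
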